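/- arXiv:2402.13451 — 3 statements merged into one kernel-verified Lean document; each statement's English description precedes it below -/
import Mathlib

section
/- For every integer n ≥ 4, the simultaneous-approximation Folklore set FS_n^* = Di_n^* \ Bad_n^* has Hausdorff dimension at least n − 2; moreover the simultaneous Dirichlet spectrum {Θ^*(ξ) : ξ ∈ ℝⁿ} has 0 as an accumulation point, in particular it is not finite. -/
open Filter MeasureTheory
open scoped ENNReal

/-- `ψ_ξ^*(t)`: the minimum of `max_j |ξ_j b₁ + b_{1+j}|` over integer vectors
`(b₁,b₂,…,b_{n+1})` with `1 ≤ |b₁| ≤ t` (simultaneous approximation). -/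
noncomputable def psiSim (n : ℕ) (ξ : Fin n → ℝ) (t : ℝ) : ℝ :=
  sInf { r : ℝ | ∃ (b1 : ℤ) (b : Fin n → ℤ),
    b1 ≠ 0 ∧ |(b1 : ℝ)| ≤ t ∧
    r = ⨆ j, |ξ j * (b1 : ℝ) + (b j : ℝ)| }

/-- `Θ^*(ξ) = limsup_{t→∞} t^{1/n} ψ_ξ^*(t)`. -/
noncomputable def ThetaSim (n : ℕ) (ξ : Fin n → ℝ) : ℝ :=
  limsup (fun t : ℝ => t ^ ((1 : ℝ) / (n : ℝ)) * psiSim n ξ t) atTop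

/-- `Θ̃^*(ξ) = liminf_{t→∞} t^{1/n} ψ_ξ^*(t)`. -/
noncomputable def ThetaTildeSim (n : ℕ) (ξ : Fin n → ℝ) : ℝ :=
  liminf (fun t : ℝ => t ^ ((1 : ℝ) / (n : ℝ)) * psiSim n ξ t) atTop

/-- `FS_n^* = Di_n^* \ Bad_n^*`. -/
def FSsim (n : ℕ) : Set (Fin n → ℝ) :=
  {ξ | ThetaSim n ξ < 1} \ {ξ | 0 < ThetaTildeSim n ξ}

section Basic


variable {n : ℕ} {ξ : Fin n → ℝ} {t : ℝ}

lemma iSup_abs_nonneg (hn : 0 < n) (g : Fin n → ℝ) :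
    0 ≤ ⨆ j, |g j| := by
  haveI : Nonempty (Fin n) := ⟨⟨0, hn⟩⟩
  exact le_ciSup_of_le (Set.Finite.bddAbove (Set.finite_range _)) ⟨0, hn⟩ (abs_nonneg _)

lemma psiSim_nonneg (hn : 0 < n) : 0 ≤ psiSim n ξ t := by
  apply Real.sInf_nonneg
  rintro x ⟨b1, b, -, -, rfl⟩
  exact iSup_abs_nonneg hn _

lemma psiSim_le (hn : 0 < n) {b1 : ℤ} {b : Fin n → ℤ} (h1 : b1 ≠ 0) (h2 : |(b1:ℝ)| ≤ t) :
    psiSim n ξ t ≤ ⨆ j, |ξ j * (b1 : ℝ) + (b j : ℝ)| := by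
  apply csInf_le
  · exact ⟨0, fun x hx => by
      rcases hx with ⟨c1, c, -, -, rfl⟩
      exact iSup_abs_nonneg hn _⟩
  · exact ⟨b1, b, h1, h2, rfl⟩

lemma le_psiSim (hn : 0 < n) (ht : 1 ≤ t) {δ : ℝ}
    (h : ∀ (b1 : ℤ) (b : Fin n → ℤ), b1 ≠ 0 → |(b1:ℝ)| ≤ t →
      δ ≤ ⨆ j, |ξ j * (b1 : ℝ) + (b j : ℝ)|) :
    δ ≤ psiSim n ξ t := by
  apply le_csInf
  · exact ⟨_, ⟨1, fun _ => 0, one_ne_zero, by simpa using ht, rfl⟩⟩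
  · rintro x ⟨b1, b, hb1, hb2, rfl⟩
    exact h b1 b hb1 hb2

end Basic





lemma floor_eq_abs_sub_lt {x y : ℝ} (h : ⌊x⌋ = ⌊y⌋) : |x - y| < 1 := by
  have h1 := Int.floor_le x
  have h2 := Int.lt_floor_add_one x
  have h3 := Int.floor_le y
  have h4 := Int.lt_floor_add_one y
  rw [abs_sub_lt_iff]
  rw [h] at h1 h2
  constructor <;> linarith

/-- multidimensional Dirichlet theorem via pigeonhole -/
lemma dirichlet_sim (m : ℕ) (hm : 0 < m) (x : Fin m → ℝ) (N : ℕ) (hN : 0 < N) :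
    ∃ q : ℕ, 0 < q ∧ q ≤ N ^ m ∧ ∃ p : Fin m → ℤ, ∀ j, |(q:ℝ) * x j - p j| < 1 / N := by
  classical
  have hNR : (0:ℝ) < N := by exact_mod_cast hN
  set F : Fin (N ^ m + 1) → (Fin m → Fin N) := fun a j =>
    ⟨(⌊(N : ℝ) * Int.fract ((a : ℕ) * x j)⌋).toNat, by
      have h0 : (0:ℝ) ≤ (N : ℝ) * Int.fract ((a : ℕ) * x j) :=
        mul_nonneg hNR.le (Int.fract_nonneg _)
      have h1 : (N : ℝ) * Int.fract ((a : ℕ) * x j) < N := by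
        nth_rewrite 2 [← mul_one (N:ℝ)]
        exact mul_lt_mul_of_pos_left (Int.fract_lt_one _) hNR
      have h2 : ⌊(N : ℝ) * Int.fract ((a : ℕ) * x j)⌋ < (N : ℤ) := by
        rw [Int.floor_lt]; exact_mod_cast h1
      have h3 : (0:ℤ) ≤ ⌊(N : ℝ) * Int.fract ((a : ℕ) * x j)⌋ := Int.floor_nonneg.2 h0
      omega⟩ with hF
  have key : ∀ a b : Fin (N ^ m + 1), (b:ℕ) < (a:ℕ) → F a = F b →
      ∃ q : ℕ, 0 < q ∧ q ≤ N ^ m ∧ ∃ p : Fin m → ℤ, ∀ j, |(q:ℝ) * x j - p j| < 1 / N := by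
    intro a b hba hFab
    refine ⟨(a:ℕ) - (b:ℕ), by omega, by have := a.isLt; omega, fun j => ⌊(a:ℕ) * x j⌋ - ⌊(b:ℕ) * x j⌋, fun j => ?_⟩
    have hfl : ⌊(N : ℝ) * Int.fract ((a : ℕ) * x j)⌋ = ⌊(N : ℝ) * Int.fract ((b : ℕ) * x j)⌋ := by
      have := congrFun hFab j
      simp only [hF, Fin.mk.injEq] at this
      have h3a : (0:ℤ) ≤ ⌊(N : ℝ) * Int.fract ((a : ℕ) * x j)⌋ :=
        Int.floor_nonneg.2 (mul_nonneg hNR.le (Int.fract_nonneg _))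
      have h3b : (0:ℤ) ≤ ⌊(N : ℝ) * Int.fract ((b : ℕ) * x j)⌋ :=
        Int.floor_nonneg.2 (mul_nonneg hNR.le (Int.fract_nonneg _))
      omega
    have habs : |(N:ℝ) * Int.fract ((a : ℕ) * x j) - (N:ℝ) * Int.fract ((b : ℕ) * x j)| < 1 :=
      floor_eq_abs_sub_lt hfl
    rw [← mul_sub, abs_mul, abs_of_pos hNR] at habs
    have hq : ((((a:ℕ) - (b:ℕ) : ℕ)):ℝ) = ((a:ℕ):ℝ) - ((b:ℕ):ℝ) := by
      push_cast [Nat.cast_sub hba.le]; ring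
    have hfr : Int.fract ((a : ℕ) * x j) - Int.fract ((b : ℕ) * x j)
        = (((a:ℕ) - (b:ℕ) : ℕ):ℝ) * x j - ((⌊(a:ℕ) * x j⌋ - ⌊(b:ℕ) * x j⌋ : ℤ) : ℝ) := by
      rw [Int.fract, Int.fract, hq]
      push_cast
      ring
    rw [hfr] at habs
    rw [lt_div_iff₀ hNR]
    calc |(((a:ℕ) - (b:ℕ):ℕ):ℝ) * x j - ((⌊(a:ℕ) * x j⌋ - ⌊(b:ℕ) * x j⌋ : ℤ):ℝ)| * N
        = N * |(((a:ℕ) - (b:ℕ):ℕ):ℝ) * x j - ((⌊(a:ℕ) * x j⌋ - ⌊(b:ℕ) * x j⌋ : ℤ):ℝ)| := by ring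
      _ < 1 := habs
  obtain ⟨a, b, hab, hFab⟩ := Fintype.exists_ne_map_eq_of_card_lt F (by
    simp [Fintype.card_fun])
  rcases Nat.lt_or_ge (b:ℕ) (a:ℕ) with h | h
  · exact key a b h hFab
  · have : (a:ℕ) < (b:ℕ) := by
      rcases Nat.lt_or_ge (a:ℕ) (b:ℕ) with h' | h'
      · exact h'
      · exact absurd (Fin.ext (le_antisymm h h') : a = b) hab
    exact key b a this hFab.symm


section PartOne


variable {n : ℕ}

/-- the zero-padding map -/
def pad (n m : ℕ) (x : Fin m → ℝ) : Fin n → ℝ :=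
  fun j => if h : (j : ℕ) < m then x ⟨j, h⟩ else 0

lemma psiSim_pad_le (hn : 4 ≤ n) (x : Fin (n-2) → ℝ) {t : ℝ} (ht : 1 ≤ t) :
    psiSim n (pad n (n-2) x) t ≤ 1 / (⌊t ^ ((1:ℝ) / ((n-2 : ℕ)):ℝ)⌋₊ : ℝ) := by
  have hn0 : 0 < n := by omega
  have hm : 0 < n - 2 := by omega
  have htpos : (0:ℝ) < t := lt_of_lt_of_le one_pos ht
  set N := ⌊t ^ ((1:ℝ) / ((n-2 : ℕ)):ℝ)⌋₊ with hNdef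
  have hmR : (0:ℝ) < ((n-2:ℕ):ℝ) := by exact_mod_cast hm
  have ht1 : (1:ℝ) ≤ t ^ ((1:ℝ)/((n-2:ℕ)):ℝ) := Real.one_le_rpow ht (by positivity)
  have hN1 : 1 ≤ N := Nat.le_floor (by exact_mod_cast ht1)
  have hNt : ((N:ℝ)) ^ ((n-2):ℕ) ≤ t := by
    have h1 : (N:ℝ) ≤ t ^ ((1:ℝ)/((n-2:ℕ)):ℝ) := Nat.floor_le (by positivity)
    calc ((N:ℝ)) ^ ((n-2):ℕ) ≤ (t ^ ((1:ℝ)/((n-2:ℕ)):ℝ)) ^ ((n-2):ℕ) :=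
          pow_le_pow_left₀ (by positivity) h1 _
      _ = t := by
          rw [← Real.rpow_natCast (t ^ ((1:ℝ)/((n-2:ℕ)):ℝ)) (n-2), ← Real.rpow_mul htpos.le]
          rw [one_div, inv_mul_cancel₀ (by exact_mod_cast hm.ne' : (((n-2):ℕ):ℝ) ≠ 0)]
          exact Real.rpow_one t
  obtain ⟨q, hq0, hqN, p, hp⟩ := dirichlet_sim (n-2) hm x N hN1
  have hb1 : ((q:ℤ)) ≠ 0 := by exact_mod_cast hq0.ne'
  have habs : |((q:ℤ):ℝ)| ≤ t := by
    rw [abs_of_pos (by exact_mod_cast hq0 : (0:ℝ) < ((q:ℤ):ℝ))]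
    calc ((q:ℤ):ℝ) ≤ ((N ^ (n-2) : ℕ) : ℝ) := by exact_mod_cast hqN
      _ = ((N:ℝ)) ^ ((n-2):ℕ) := by push_cast; ring
      _ ≤ t := hNt
  haveI : Nonempty (Fin n) := ⟨⟨0, hn0⟩⟩
  refine le_trans (psiSim_le hn0 hb1 habs (b := fun j =>
    if h : (j : ℕ) < n-2 then -(p ⟨j, h⟩) else 0)) ?_
  apply ciSup_le
  intro j
  by_cases h : (j : ℕ) < n-2
  · simp only [pad, h, dif_pos]
    rw [mul_comm]
    push_cast
    rw [← sub_eq_add_neg]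
    exact le_of_lt (by simpa using hp ⟨j, h⟩)
  · simp only [pad, h, dif_neg, not_false_iff]
    simp only [zero_mul, dif_neg h, Int.cast_zero, add_zero, abs_zero]
    positivity

lemma tendsto_pad (hn : 4 ≤ n) (x : Fin (n-2) → ℝ) :
    Tendsto (fun t : ℝ => t ^ ((1 : ℝ) / (n : ℝ)) * psiSim n (pad n (n-2) x) t)
      atTop (nhds 0) := by
  have hn0 : 0 < n := by omega
  have hm : 0 < n - 2 := by omega
  have hmR : (0:ℝ) < ((n-2:ℕ):ℝ) := by exact_mod_cast hm
  have hnR : (0:ℝ) < (n:ℝ) := by exact_mod_cast hn0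
  have hexp : (1:ℝ)/(n:ℝ) - (1:ℝ)/((n-2:ℕ):ℝ) < 0 := by
    have h2 : ((n-2:ℕ):ℝ) < (n:ℝ) := by exact_mod_cast (by omega : n - 2 < n)
    have h1 : (1:ℝ)/(n:ℝ) < 1/((n-2:ℕ):ℝ) := by
      apply div_lt_div_of_pos_left one_pos hmR h2
    linarith
  have hlim : Tendsto (fun t : ℝ => 2 * t ^ ((1:ℝ)/(n:ℝ) - (1:ℝ)/((n-2:ℕ):ℝ))) atTop (nhds 0) := by
    have := (tendsto_rpow_neg_atTop (y := -((1:ℝ)/(n:ℝ) - (1:ℝ)/((n-2:ℕ):ℝ))) (by linarith))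
    simp only [neg_neg] at this
    simpa using (this.const_mul (2:ℝ))
  apply tendsto_of_tendsto_of_tendsto_of_le_of_le' tendsto_const_nhds hlim
  · filter_upwards [eventually_ge_atTop (1:ℝ)] with t ht
    exact mul_nonneg (Real.rpow_nonneg (by linarith) _) (psiSim_nonneg hn0)
  · filter_upwards [eventually_ge_atTop ((2:ℝ) ^ ((n-2):ℕ))] with t ht
    have ht2 : (2:ℝ)^((n-2):ℕ) ≤ t := ht
    have ht1 : (1:ℝ) ≤ t := le_trans (one_le_pow₀ (by norm_num)) ht2
    have htpos : (0:ℝ) < t := by linarith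
    set N := ⌊t ^ ((1:ℝ) / ((n-2 : ℕ)):ℝ)⌋₊ with hNdef
    have hrt2 : (2:ℝ) ≤ t ^ ((1:ℝ)/((n-2:ℕ)):ℝ) := by
      calc (2:ℝ) = ((2:ℝ)^((n-2):ℕ)) ^ ((1:ℝ)/((n-2:ℕ)):ℝ) := by
            rw [← Real.rpow_natCast (2:ℝ) (n-2), ← Real.rpow_mul (by norm_num)]
            rw [mul_one_div, div_self (by exact_mod_cast hm.ne' : (((n-2):ℕ):ℝ) ≠ 0), Real.rpow_one]
        _ ≤ t ^ ((1:ℝ)/((n-2:ℕ)):ℝ) := Real.rpow_le_rpow (by positivity) ht2 (by positivity)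
    have hNlarge : t ^ ((1:ℝ)/((n-2:ℕ)):ℝ) / 2 ≤ (N:ℝ) := by
      have h1 : t ^ ((1:ℝ)/((n-2:ℕ)):ℝ) - 1 ≤ (N:ℝ) := by
        have := Nat.sub_one_lt_floor (t ^ ((1:ℝ)/((n-2:ℕ)):ℝ))
        linarith [this]
      nlinarith [hrt2]
    have hNpos : (0:ℝ) < (N:ℝ) := by
      have : (1:ℝ) ≤ t ^ ((1:ℝ)/((n-2:ℕ)):ℝ) / 2 := by linarith
      linarith
    calc t ^ ((1:ℝ)/(n:ℝ)) * psiSim n (pad n (n-2) x) t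
        ≤ t ^ ((1:ℝ)/(n:ℝ)) * (1 / N) :=
          mul_le_mul_of_nonneg_left (psiSim_pad_le hn x ht1) (Real.rpow_nonneg htpos.le _)
      _ ≤ t ^ ((1:ℝ)/(n:ℝ)) * (2 / t ^ ((1:ℝ)/((n-2:ℕ)):ℝ)) := by
          apply mul_le_mul_of_nonneg_left _ (Real.rpow_nonneg htpos.le _)
          rw [div_le_div_iff₀ hNpos (by positivity)]
          nlinarith [hNlarge]
      _ = 2 * t ^ ((1:ℝ)/(n:ℝ) - (1:ℝ)/((n-2:ℕ)):ℝ) := by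
          rw [Real.rpow_sub htpos]
          ring

lemma pad_mem_FSsim (hn : 4 ≤ n) (x : Fin (n-2) → ℝ) :
    pad n (n-2) x ∈ FSsim n := by
  have h := tendsto_pad hn x
  constructor
  · show ThetaSim n _ < 1
    rw [ThetaSim, h.limsup_eq]
    norm_num
  · show ¬ (0 < ThetaTildeSim n _)
    rw [ThetaTildeSim, h.liminf_eq]
    exact lt_irrefl 0

lemma isometry_pad (hn : 4 ≤ n) : Isometry (pad n (n-2)) := by
  have hm : n - 2 ≤ n := by omega
  apply Isometry.of_dist_eq
  intro x y
  apply le_antisymm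
  · rw [dist_pi_le_iff dist_nonneg]
    intro j
    by_cases h : (j : ℕ) < n - 2
    · simp only [pad, dif_pos h]
      exact dist_le_pi_dist x y ⟨j, h⟩
    · simp only [pad, dif_neg h, dist_self]
      exact dist_nonneg
  · rw [dist_pi_le_iff dist_nonneg]
    intro i
    have hi : (i : ℕ) < n := lt_of_lt_of_le i.isLt hm
    have : x i = pad n (n-2) x ⟨i, hi⟩ ∧ y i = pad n (n-2) y ⟨i, hi⟩ := by
      constructor <;> · simp only [pad, dif_pos (show ((⟨i, hi⟩ : Fin n) : ℕ) < n - 2 from i.isLt)]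
    rw [this.1, this.2]
    exact dist_le_pi_dist _ _ _

lemma dimH_FSsim (hn : 4 ≤ n) : ((n - 2 : ℕ) : ℝ≥0∞) ≤ dimH (FSsim n) := by
  have h1 : Set.range (pad n (n-2)) ⊆ FSsim n := by
    rintro _ ⟨x, rfl⟩; exact pad_mem_FSsim hn x
  refine le_trans (le_of_eq ?_) (dimH_mono h1)
  rw [← Set.image_univ, (isometry_pad hn).dimH_image]
  rw [Real.dimH_univ_eq_finrank (Fin (n-2) → ℝ)]
  rw [Module.finrank_pi, Fintype.card_fin]

end PartOne



namespace DySim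

/-- ceiling of `n(e+H)/(n-1)` -/
def cN (n H e : ℕ) : ℕ := (n * (e + H) + (n - 2)) / (n - 1)

/-- the tight-round parameter sequence -/
def Kseq (n H : ℕ) : ℕ → ℕ
  | 0 => n * (H + 1)
  | r + 1 => (cN n H)^[2*n] (cN n H ((n-1) * Kseq n H r))

/-- `A r`, start of the spare chain in round `r` -/
def Aseq (n H : ℕ) (r : ℕ) : ℕ := cN n H ((n-1) * Kseq n H r)

/-- the spare coordinate's exponent sequence -/
def Espare (n H : ℕ) (i : ℕ) : ℕ := (cN n H)^[i % (2*n)] (Aseq n H (i / (2*n)))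

/-- exponent sequence of coordinate `j` -/
def seqc (n H : ℕ) (j : Fin n) (r : ℕ) : ℕ :=
  if (j:ℕ) < n - 1 then ((j:ℕ)+1) * Kseq n H r else Espare n H r

/-- merged exponent sequence -/
def Wseq (n H : ℕ) (m : ℕ) : ℕ :=
  if m % (3*n-1) < n - 1 then (m % (3*n-1) + 1) * Kseq n H (m / (3*n-1))
  else (cN n H)^[m % (3*n-1) - (n-1)] (Aseq n H (m / (3*n-1)))

variable {n H : ℕ}

lemma cN_ge (hn : 4 ≤ n) (e : ℕ) : n * (e + H) ≤ (n-1) * cN n H e := by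
  unfold cN
  have h1 : 0 < n - 1 := by omega
  have hdm := Nat.div_add_mod (n * (e + H) + (n - 2)) (n - 1)
  have hm := Nat.mod_lt (n * (e + H) + (n - 2)) h1
  omega

lemma cN_le (hn : 4 ≤ n) (e : ℕ) : (n-1) * cN n H e ≤ n * (e + H) + (n - 2) := by
  unfold cN
  rw [mul_comm]
  exact Nat.div_mul_le_self _ _

lemma cN_ge_add (hn : 4 ≤ n) (e : ℕ) : e + H ≤ cN n H e := by
  have h := cN_ge (H := H) hn e
  have h2 : (n-1) * (e + H) ≤ (n-1) * cN n H e := by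
    refine le_trans ?_ h
    have e1 : (n-1) * (e + H) = n * (e+H) - (e+H) := by rw [Nat.sub_one_mul]
    omega
  exact Nat.le_of_mul_le_mul_left h2 (show 0 < n - 1 by omega)

lemma cN_gt (hn : 4 ≤ n) (hH : 1 ≤ H) (e : ℕ) : e < cN n H e := by
  have := cN_ge_add (H := H) hn e
  omega

lemma cN_mono (hn : 4 ≤ n) {e e' : ℕ} (h : e ≤ e') : cN n H e ≤ cN n H e' := by
  unfold cN
  exact Nat.div_le_div_right (by nlinarith)

lemma cN_growth (hn : 4 ≤ n) (x : ℕ) : x + x / n ≤ cN n H x := by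
  have h2 : n * (x / n) ≤ x := by
    rw [mul_comm]; exact Nat.div_mul_le_self x n
  have h3 : (n-1) * (x + x/n) ≤ n * (x + H) := by
    have e1 : (n-1) * (x + x/n) = (n-1)*x + (n-1)*(x/n) := Nat.mul_add _ _ _
    have e2 : (n-1)*(x/n) ≤ n*(x/n) := Nat.mul_le_mul_right _ (by omega)
    have e4 : (n-1)*x + x = n*x := by
      have e6 : (n-1)*x = n*x - x := by rw [Nat.sub_one_mul]
      have e7 : x ≤ n*x := Nat.le_mul_of_pos_left x (by omega)
      omega
    have e5 : n*x ≤ n*(x+H) := Nat.mul_le_mul_left _ (by omega)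
    omega
  have h4 : (n-1) * (x + x/n) ≤ (n-1) * cN n H x := le_trans h3 (cN_ge hn x)
  exact Nat.le_of_mul_le_mul_left h4 (show 0 < n - 1 by omega)

lemma iter_growth (hn : 4 ≤ n) (k : ℕ) (x : ℕ) : x + k * (x / n) ≤ (cN n H)^[k] x := by
  induction k with
  | zero => simp
  | succ k ih =>
    rw [Function.iterate_succ_apply']
    have h1 : x ≤ (cN n H)^[k] x := le_trans (by omega) ih
    have h2 := cN_growth (H := H) hn ((cN n H)^[k] x)
    have h3 : x / n ≤ ((cN n H)^[k] x) / n := Nat.div_le_div_right h1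
    have e1 : (k+1) * (x/n) = k * (x/n) + (x/n) := by rw [Nat.succ_mul]
    omega

lemma iter_double (hn : 4 ≤ n) {x : ℕ} (hx : 2*n ≤ x) : 2*x + 2 ≤ (cN n H)^[2*n] x := by
  have h := iter_growth (H := H) hn (2*n) x
  have hdm := Nat.div_add_mod x n
  have hm : x % n < n := Nat.mod_lt x (by omega)
  have e1 : (2*n) * (x/n) = 2 * (n * (x/n)) := by ring
  omega

end DySim

namespace Part2

open DySim
variable {n H : ℕ}

lemma iter_ge (hn : 4 ≤ n) (k x : ℕ) : x ≤ (cN n H)^[k] x :=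
  le_trans (by omega) (iter_growth hn k x)

lemma A_ge (hn : 4 ≤ n) (r : ℕ) : n * Kseq n H r + H ≤ Aseq n H r := by
  set K := Kseq n H r
  have h := cN_ge (H := H) hn ((n-1) * K)
  have h2 : (n-1) * (n * K + H) ≤ n * ((n-1) * K + H) := by
    have e1 : (n-1) * (n * K + H) = (n-1)*(n*K) + (n-1)*H := Nat.mul_add _ _ _
    have e2 : n * ((n-1) * K + H) = n*((n-1)*K) + n*H := Nat.mul_add _ _ _
    have e3 : (n-1)*(n*K) = n*((n-1)*K) := by ring
    have e4 : (n-1)*H ≤ n*H := Nat.mul_le_mul_right _ (by omega)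
    omega
  exact Nat.le_of_mul_le_mul_left (le_trans h2 h) (show 0 < n - 1 by omega)

lemma A_le (hn : 4 ≤ n) (r : ℕ) : Aseq n H r ≤ n * Kseq n H r + 2*H + 2 := by
  set K := Kseq n H r
  have h := cN_le (H := H) hn ((n-1) * K)
  have h2 : n * ((n-1) * K + H) + (n - 2) ≤ (n-1) * (n * K + 2*H + 2) := by
    have e1 : (n-1) * (n * K + 2*H + 2) = (n-1)*(n*K) + (n-1)*(2*H) + (n-1)*2 := by ring
    have e2 : n * ((n-1) * K + H) = n*((n-1)*K) + n*H := Nat.mul_add _ _ _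
    have e3 : (n-1)*(n*K) = n*((n-1)*K) := by ring
    have e4 : n*H + (n-2) ≤ (n-1)*(2*H) + (n-1)*2 := by
      have : (n-1)*(2*H) = 2*n*H - 2*H := by rw [Nat.sub_mul]; ring_nf
      have h5 : 2*H ≤ n*H := Nat.mul_le_mul_right _ (by omega)
      have h6 : 2*n*H = n*H + n*H := by ring
      omega
    omega
  exact Nat.le_of_mul_le_mul_left (le_trans h h2) (show 0 < n - 1 by omega)

lemma K0_le_K (hn : 4 ≤ n) (r : ℕ) : n * (H + 1) ≤ Kseq n H r := by
  induction r with
  | zero => exact le_refl _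
  | succ r ih =>
    show n * (H + 1) ≤ (cN n H)^[2*n] (cN n H ((n-1) * Kseq n H r))
    refine le_trans ?_ (iter_ge hn _ _)
    refine le_trans ?_ (cN_ge_add hn _)
    have : n * (H+1) ≤ (n-1) * Kseq n H r := by
      refine le_trans ?_ (Nat.mul_le_mul_left (n-1) ih)
      have h1 : (n-1) * (n * (H+1)) = n * ((n-1) * (H+1)) := by ring
      have h2 : H + 1 ≤ (n-1)*(H+1) := Nat.le_mul_of_pos_left _ (by omega)
      calc n * (H+1) ≤ n * ((n-1)*(H+1)) := Nat.mul_le_mul_left _ h2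
        _ = (n-1) * (n * (H+1)) := by ring
    omega

lemma A_le_Ksucc (hn : 4 ≤ n) (r : ℕ) : 2 * Aseq n H r + 2 ≤ Kseq n H (r+1) := by
  have hA : 2*n ≤ Aseq n H r := by
    have h1 := A_ge (H := H) hn r
    have h2 := K0_le_K (H := H) hn r
    nlinarith
  exact iter_double hn hA

lemma K_lt_Ksucc (hn : 4 ≤ n) (r : ℕ) : Kseq n H r < Kseq n H (r+1) := by
  have h1 := A_ge (H := H) hn r
  have h2 := A_le_Ksucc (H := H) hn r
  nlinarith [K0_le_K (H := H) hn r]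

lemma K_strictMono (hn : 4 ≤ n) : StrictMono (Kseq n H) :=
  strictMono_nat_of_lt_succ (K_lt_Ksucc hn)

lemma rung_step (hn : 4 ≤ n) {K j : ℕ} (hK : n*(H+1) ≤ K) (hj : 1 ≤ j) (hj2 : j ≤ n-2) :
    cN n H (j*K) ≤ (j+1)*K := by
  have h1 := cN_le (H := H) hn (j*K)
  have h2 : n*(j*K + H) + (n-2) ≤ (n-1)*((j+1)*K) := by
    zify
    have hc1 : (1:ℤ) ≤ n - 1 := by
      have : (4:ℤ) ≤ n := by exact_mod_cast hn
      linarith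
    have hc2 : (j:ℤ) ≤ (n:ℕ) - 2 := by
      have : (j:ℤ) ≤ ((n-2 : ℕ) : ℤ) := by exact_mod_cast hj2
      have h4 : ((n-2:ℕ):ℤ) = (n:ℤ) - 2 := by
        have : (2:ℤ) ≤ (n:ℤ) := by exact_mod_cast (by omega : 2 ≤ n)
        omega
      linarith [this, h4.le, h4.ge]
    have hc3 : ((n-1:ℕ):ℤ) = (n:ℤ) - 1 := by
      have : (1:ℤ) ≤ (n:ℤ) := by exact_mod_cast (by omega : 1 ≤ n)
      omega
    have hc4 : ((n-2:ℕ):ℤ) = (n:ℤ) - 2 := by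
      have : (2:ℤ) ≤ (n:ℤ) := by exact_mod_cast (by omega : 2 ≤ n)
      omega
    have hK' : (n:ℤ)*(H+1) ≤ K := by exact_mod_cast hK
    have hj' : (1:ℤ) ≤ j := by exact_mod_cast hj
    rw [hc3, hc4]
    have hc5 : (j:ℤ) ≤ (n:ℤ) - 2 := by
      have e := hc2
      rw [show ((n:ℕ):ℤ) = (n:ℤ) from rfl] at e
      have h4 : ((n-2:ℕ):ℤ) = (n:ℤ) - 2 := hc4
      calc (j:ℤ) ≤ ((n-2:ℕ):ℤ) := by exact_mod_cast hj2
        _ = (n:ℤ) - 2 := h4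
    nlinarith [hc5, hK', hj', (by exact_mod_cast hn : (4:ℤ) ≤ n)]
  exact Nat.le_of_mul_le_mul_left (le_trans h1 h2) (show 0 < n - 1 by omega)

lemma Espare_eq (hn : 4 ≤ n) (q l : ℕ) (hl : l < 2*n) :
    Espare n H (2*n*q + l) = (cN n H)^[l] (Aseq n H q) := by
  unfold Espare
  rw [Nat.mul_add_div (by omega), Nat.mul_add_mod]
  rw [Nat.div_eq_of_lt hl, Nat.mod_eq_of_lt hl, add_zero]

lemma Espare_lt (hn : 4 ≤ n) (hH : 1 ≤ H) (i : ℕ) : Espare n H i < Espare n H (i+1) := by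
  have h2n : 0 < 2*n := by omega
  obtain ⟨q, l, hl, rfl⟩ : ∃ q l, l < 2*n ∧ i = 2*n*q + l :=
    ⟨i / (2*n), i % (2*n), Nat.mod_lt _ h2n, (Nat.div_add_mod i (2*n)).symm⟩
  rw [Espare_eq hn q l hl]
  rcases Nat.lt_or_ge (l+1) (2*n) with h | h
  · have he : 2*n*q + l + 1 = 2*n*q + (l+1) := by ring
    rw [he, Espare_eq hn q (l+1) h, Function.iterate_succ_apply']
    exact cN_gt hn hH _
  · have hl2 : l = 2*n - 1 := by omega
    have he2 : 2*n*(q+1) = 2*n*q + 2*n := by ring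
    have he : 2*n*q + l + 1 = 2*n*(q+1) + 0 := by omega
    rw [he, Espare_eq hn (q+1) 0 (by omega)]
    simp only [Function.iterate_zero_apply]
    have h1 : (cN n H)^[2*n] (Aseq n H q) = Kseq n H (q+1) := rfl
    have h2 : (cN n H)^[l+1] (Aseq n H q) = Kseq n H (q+1) := by rw [← h1]; congr 1; omega
    have h3 : (cN n H)^[l] (Aseq n H q) < (cN n H)^[l+1] (Aseq n H q) := by
      rw [Function.iterate_succ_apply']
      exact cN_gt hn hH _
    have h4 : Kseq n H (q+1) ≤ Aseq n H (q+1) := by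
      have := A_ge (H := H) hn (q+1)
      nlinarith [K0_le_K (H := H) hn (q+1)]
    omega

end Part2

namespace Part2
open DySim
variable {n H : ℕ}

lemma seqc_lt (hn : 4 ≤ n) (hH : 1 ≤ H) (j : Fin n) (r : ℕ) :
    seqc n H j r < seqc n H j (r+1) := by
  unfold seqc
  by_cases h : (j:ℕ) < n - 1
  · simp only [h, if_true]
    exact mul_lt_mul_of_pos_left (K_lt_Ksucc hn r) (show (0:ℕ) < (j:ℕ)+1 by omega)
  · simp only [h, if_false]
    exact Espare_lt hn hH r

lemma seqc_strictMono (hn : 4 ≤ n) (hH : 1 ≤ H) (j : Fin n) :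
    StrictMono (seqc n H j) :=
  strictMono_nat_of_lt_succ (seqc_lt hn hH j)

lemma Wseq_block (hn : 4 ≤ n) (q l : ℕ) (hl : l < 3*n-1) :
    Wseq n H ((3*n-1)*q + l) =
      if l < n-1 then (l+1) * Kseq n H q else (cN n H)^[l - (n-1)] (Aseq n H q) := by
  unfold Wseq
  rw [Nat.mul_add_div (by omega), Nat.mul_add_mod]
  rw [Nat.div_eq_of_lt hl, Nat.mod_eq_of_lt hl, add_zero]

lemma Wstep (hn : 4 ≤ n) (m : ℕ) : cN n H (Wseq n H m) ≤ Wseq n H (m+1) := by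
  have hL : 0 < 3*n-1 := by omega
  obtain ⟨q, l, hl, rfl⟩ : ∃ q l, l < 3*n-1 ∧ m = (3*n-1)*q + l :=
    ⟨m / (3*n-1), m % (3*n-1), Nat.mod_lt _ hL, (Nat.div_add_mod m (3*n-1)).symm⟩
  rw [Wseq_block hn q l hl]
  rcases Nat.lt_or_ge (l+1) (3*n-1) with h1 | h1
  · have he : (3*n-1)*q + l + 1 = (3*n-1)*q + (l+1) := by ring
    rw [he, Wseq_block hn q (l+1) h1]
    rcases Nat.lt_or_ge (l+1) (n-1) with h2 | h2
    · simp only [show l < n-1 by omega, if_true, h2, if_true]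
      exact rung_step hn (K0_le_K hn q) (by omega) (by omega)
    · rcases Nat.lt_or_ge l (n-1) with h3 | h3
      · -- l + 1 = n - 1
        have h4 : l + 1 = n - 1 := by omega
        simp only [h3, if_true, show ¬ (l+1 < n-1) by omega, if_false]
        rw [show l + 1 - (n-1) = 0 by omega]
        simp only [Function.iterate_zero_apply]
        unfold Aseq
        rw [← h4]
      · simp only [show ¬ (l < n-1) by omega, if_false, show ¬ (l+1 < n-1) by omega, if_false]
        rw [show l + 1 - (n-1) = (l - (n-1)) + 1 by omega, Function.iterate_succ_apply']
  · have h4 : l = 3*n-2 := by omega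
    have he2 : (3*n-1)*(q+1) = (3*n-1)*q + (3*n-1) := by ring
    have he : (3*n-1)*q + l + 1 = (3*n-1)*(q+1) + 0 := by omega
    rw [he, Wseq_block hn (q+1) 0 (by omega)]
    simp only [show (0:ℕ) < n-1 by omega, if_true, show ¬ (l < n-1) by omega, if_false]
    rw [zero_add, one_mul]
    show cN n H ((cN n H)^[l - (n-1)] (Aseq n H q)) ≤ Kseq n H (q+1)
    have h5 : Kseq n H (q+1) = (cN n H)^[2*n] (Aseq n H q) := rfl
    have h6 : (2*n : ℕ) = (l - (n-1)) + 1 := by omega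
    rw [h5, h6, Function.iterate_succ_apply']

lemma Wstep' (hn : 4 ≤ n) (hH : 1 ≤ H) (m : ℕ) : cN n H (Wseq n H m) ≤ Wseq n H (m+1) :=
  Wstep hn m

lemma Wseq_strictMono (hn : 4 ≤ n) (hH : 1 ≤ H) : StrictMono (Wseq n H) :=
  strictMono_nat_of_lt_succ (fun m => lt_of_lt_of_le (cN_gt hn hH _) (Wstep hn m))

lemma seqc_mem_W (hn : 4 ≤ n) (j : Fin n) (r : ℕ) :
    ∃ m, seqc n H j r = Wseq n H m := by
  by_cases h : (j:ℕ) < n - 1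
  · refine ⟨(3*n-1)*r + (j:ℕ), ?_⟩
    rw [Wseq_block hn r (j:ℕ) (by omega)]
    simp only [h, if_true, seqc]
  · refine ⟨(3*n-1)*(r/(2*n)) + ((n-1) + r % (2*n)), ?_⟩
    have hmod : r % (2*n) < 2*n := Nat.mod_lt _ (by omega)
    rw [Wseq_block hn (r/(2*n)) ((n-1) + r % (2*n)) (by omega)]
    simp only [show ¬ ((n-1) + r % (2*n) < n-1) by omega, if_false, seqc, h]
    rw [show (n-1) + r % (2*n) - (n-1) = r % (2*n) by omega]
    rfl

lemma Wseq_zero (hn : 4 ≤ n) : Wseq n H 0 = Kseq n H 0 := by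
  unfold Wseq
  simp only [Nat.zero_div, Nat.zero_mod]
  rw [if_pos (by omega : 0 < n - 1), zero_add, one_mul]

end Part2



namespace Part2

variable {u : ℕ → ℕ}

lemma mono_shift (hu : StrictMono u) (R i : ℕ) : u R + i ≤ u (i + R) := by
  induction i with
  | zero => simp
  | succ i ih =>
    have := hu (show i + R < i + 1 + R by omega)
    omega

lemma two_zpow_neg_nat_le {a b : ℕ} (h : b ≤ a) : (2:ℝ)^(-(a : ℤ)) ≤ (2:ℝ)^(-(b:ℤ)) := by
  apply zpow_le_zpow_right₀ (by norm_num)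
  have : (b:ℤ) ≤ (a:ℤ) := by exact_mod_cast h
  omega

lemma two_zpow_neg_eq (r : ℕ) : (2:ℝ)^(-(r:ℤ)) = (1/2:ℝ)^r := by
  rw [one_div, inv_pow, ← zpow_natCast (2:ℝ) r, ← zpow_neg]

lemma summable_two_zpow (hu : StrictMono u) :
    Summable (fun r => (2:ℝ)^(-(u r : ℤ))) := by
  refine Summable.of_nonneg_of_le (fun r => by positivity) (fun r => ?_) summable_geometric_two
  rw [← two_zpow_neg_eq]
  exact two_zpow_neg_nat_le hu.le_apply

lemma tail_le (hu : StrictMono u) (R : ℕ) :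
    ∑' i, (2:ℝ)^(-(u (i + R) : ℤ)) ≤ 2 * (2:ℝ)^(-(u R : ℤ)) := by
  have hsum : Summable (fun i => (2:ℝ)^(-(u (i + R) : ℤ))) := by
    have := (summable_two_zpow hu).comp_injective (add_left_injective R)
    exact this
  have hbd : ∀ i, (2:ℝ)^(-(u (i + R) : ℤ)) ≤ (2:ℝ)^(-(u R : ℤ)) * (1/2:ℝ)^i := by
    intro i
    have h1 := mono_shift hu R i
    calc (2:ℝ)^(-(u (i + R) : ℤ)) ≤ (2:ℝ)^(-((u R : ℤ) + i)) := by
          apply zpow_le_zpow_right₀ (by norm_num)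
          have : (u R : ℤ) + i ≤ (u (i + R) : ℤ) := by exact_mod_cast h1
          omega
      _ = (2:ℝ)^(-(u R : ℤ)) * (1/2:ℝ)^i := by
          rw [neg_add, zpow_add₀ (by norm_num : (2:ℝ) ≠ 0)]
          rw [two_zpow_neg_eq i]
  calc ∑' i, (2:ℝ)^(-(u (i + R) : ℤ))
      ≤ ∑' i, (2:ℝ)^(-(u R : ℤ)) * (1/2:ℝ)^i := by
        apply Summable.tsum_le_tsum hbd hsum
        exact Summable.mul_left _ summable_geometric_two
    _ = (2:ℝ)^(-(u R : ℤ)) * 2 := by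
        rw [tsum_mul_left, tsum_geometric_two]
    _ = 2 * (2:ℝ)^(-(u R : ℤ)) := by ring

lemma tail_ge (hu : StrictMono u) (R : ℕ) :
    (2:ℝ)^(-(u R : ℤ)) ≤ ∑' i, (2:ℝ)^(-(u (i + R) : ℤ)) := by
  have hsum : Summable (fun i => (2:ℝ)^(-(u (i + R) : ℤ))) := by
    have := (summable_two_zpow hu).comp_injective (add_left_injective R)
    exact this
  have := Summable.le_tsum hsum 0 (fun i _ => by positivity)
  simpa using this

/-- the head numerator -/
def headN (u : ℕ → ℕ) (R : ℕ) : ℕ := ∑ i ∈ Finset.range (R+1), 2^(u R - u i)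

lemma headN_odd (hu : StrictMono u) (R : ℕ) : Odd (headN u R) := by
  unfold headN
  rw [Finset.sum_range_succ, Nat.sub_self, pow_zero]
  have heven : 2 ∣ ∑ i ∈ Finset.range R, 2^(u R - u i) := by
    apply Finset.dvd_sum
    intro i hi
    have h1 := hu (Finset.mem_range.1 hi)
    exact dvd_pow_self 2 (by omega)
  rw [Nat.odd_iff]
  omega

lemma head_eq (hu : StrictMono u) (R : ℕ) :
    ∑ i ∈ Finset.range (R+1), (2:ℝ)^(-(u i : ℤ)) = (headN u R : ℝ) / 2^(u R) := by
  unfold headN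
  push_cast
  rw [Finset.sum_div]
  apply Finset.sum_congr rfl
  intro i hi
  have hle : u i ≤ u R := hu.monotone (Nat.lt_succ_iff.mp (Finset.mem_range.1 hi))
  calc (2:ℝ)^(-(u i:ℤ)) = (2:ℝ)^(((u R - u i : ℕ):ℤ) - (u R:ℤ)) := by
        congr 1
        rw [Nat.cast_sub hle]
        ring
    _ = (2:ℝ)^(((u R - u i:ℕ)):ℤ) / (2:ℝ)^((u R:ℕ):ℤ) := by
        rw [zpow_sub₀ (by norm_num : (2:ℝ) ≠ 0)]
    _ = (2:ℝ)^((u R - u i:ℕ)) / (2:ℝ)^(u R:ℕ) := by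
        rw [zpow_natCast, zpow_natCast]

end Part2

namespace Core
variable {u : ℕ → ℕ}
open Part2

lemma odd_int_sub_even_ne {a b : ℤ} (ha : Odd a) (hb : Even b) : a - b ≠ 0 := by
  intro h
  have : a = b := by omega
  rw [this] at ha
  exact (Int.not_odd_iff_even.mpr hb) ha

lemma core1 (hu : StrictMono u) (R : ℕ) {q s w : ℕ} (hq : q = 2^s * w) (hw : ¬ 2 ∣ w)
    (hsc : s < u R) (p : ℤ) :
    (2:ℝ)^((s:ℤ) - (u R:ℤ)) - (q:ℝ) * (2 * (2:ℝ)^(-(u (R+1) : ℤ)))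
      ≤ |(q:ℝ) * (∑' r, (2:ℝ)^(-(u r : ℤ))) - p| := by
  have hsumm := summable_two_zpow hu
  have hsplit := Summable.sum_add_tsum_nat_add (f := fun r => (2:ℝ)^(-(u r : ℤ))) (R+1) hsumm
  set S := ∑ i ∈ Finset.range (R+1), (2:ℝ)^(-(u i : ℤ)) with hS
  set T := ∑' i, (2:ℝ)^(-(u (i + (R+1)) : ℤ)) with hT
  have hXe : (∑' r, (2:ℝ)^(-(u r : ℤ))) = S + T := hsplit.symm
  have hT0 : 0 ≤ T := tsum_nonneg (fun i => by positivity)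
  have hTle : T ≤ 2 * (2:ℝ)^(-(u (R+1) : ℤ)) := tail_le hu (R+1)
  -- the integer lower bound
  have hSval : S = (headN u R : ℝ) / 2^(u R) := head_eq hu R
  have hkey : (2:ℝ)^((s:ℤ) - (u R:ℤ)) ≤ |(q:ℝ) * S - p| := by
    rw [hSval]
    have h2R : (0:ℝ) < 2^(u R) := by positivity
    have heq : (q:ℝ) * ((headN u R : ℝ) / 2^(u R)) - p
        = (((q * headN u R : ℤ) - p * 2^(u R) : ℤ) : ℝ) / 2^(u R) := by
      push_cast
      field_simp
    rw [heq, abs_div, abs_of_pos h2R, le_div_iff₀ h2R]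
    -- reduce to integer estimate
    have hint : (2:ℤ)^s ≤ |(q * headN u R : ℤ) - p * 2^(u R)| := by
      have hfac : ((q * headN u R : ℤ) - p * 2^(u R))
          = 2^s * ((w * headN u R : ℤ) - p * 2^(u R - s)) := by
        have h1 : (q:ℤ) = 2^s * w := by exact_mod_cast hq
        have h2 : (2:ℤ)^(u R) = 2^s * 2^(u R - s) := by
          rw [← pow_add]
          congr 1
          omega
        rw [h1, h2]
        ring
      rw [hfac, abs_mul, abs_pow]
      have hD : ((w * headN u R : ℤ) - p * 2^(u R - s)) ≠ 0 := by
        apply odd_int_sub_even_ne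
        · have how : Odd w := Nat.odd_iff.mpr (by omega)
          have := (how.mul (headN_odd hu R))
          exact_mod_cast this
        · have h1 : 1 ≤ u R - s := by omega
          have h2 : Even ((2:ℤ)^(u R - s)) := by
            rcases (dvd_pow_self (2:ℤ) (show u R - s ≠ 0 by omega)) with ⟨c, hc⟩
            exact ⟨c, by omega⟩
          exact (Int.even_mul.mpr (Or.inr h2))
      have : 1 ≤ |(w * headN u R : ℤ) - p * 2^(u R - s)| := by
        rcases abs_pos.mpr hD with h
        omega
      calc (2:ℤ)^s = |(2:ℤ)|^s * 1 := by simp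
        _ ≤ |(2:ℤ)|^s * |(w * headN u R : ℤ) - p * 2^(u R - s)| :=
            mul_le_mul_of_nonneg_left this (by positivity)
    have hpow : (2:ℝ)^((s:ℤ) - (u R:ℤ)) * 2^(u R) = (2:ℝ)^(s:ℕ) := by
      rw [← zpow_natCast (2:ℝ) (u R), ← zpow_add₀ (by norm_num : (2:ℝ) ≠ 0)]
      rw [sub_add_cancel, zpow_natCast]
    rw [hpow]
    calc (2:ℝ)^(s:ℕ) = (((2:ℤ)^s : ℤ) : ℝ) := by push_cast; ring
      _ ≤ ((|(q * headN u R : ℤ) - p * 2^(u R)| : ℤ) : ℝ) := by exact_mod_cast hint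
      _ = |(((q * headN u R : ℤ) - p * 2^(u R) : ℤ) : ℝ)| := by
          rw [Int.cast_abs]
  calc (2:ℝ)^((s:ℤ) - (u R:ℤ)) - (q:ℝ) * (2 * (2:ℝ)^(-(u (R+1) : ℤ)))
      ≤ |(q:ℝ) * S - p| - (q:ℝ) * T := by
        have : (q:ℝ) * T ≤ (q:ℝ) * (2 * (2:ℝ)^(-(u (R+1) : ℤ))) :=
          mul_le_mul_of_nonneg_left hTle (by positivity)
        linarith [hkey]
    _ ≤ |(q:ℝ) * (S + T) - p| := by
        have h1 : |(q:ℝ) * (S + T) - p| = |((q:ℝ) * S - p) + (q:ℝ) * T| := by ring_nf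
        rw [h1]
        have h2 := abs_add_le (((q:ℝ) * S - p) + (q:ℝ) * T) (-((q:ℝ) * T))
        simp only [add_neg_cancel_right] at h2
        rw [abs_neg] at h2
        have h3 : |(q:ℝ) * T| = (q:ℝ) * T := abs_of_nonneg (by positivity)
        linarith
    _ = |(q:ℝ) * (∑' r, (2:ℝ)^(-(u r : ℤ))) - p| := by rw [hXe]

end Core

namespace Core
variable {u : ℕ → ℕ}
open Part2

lemma core2 (hu : StrictMono u) (R₀ : ℕ) {q s w : ℕ} (hq : q = 2^s * w) (hw : ¬ 2 ∣ w)
    (hhead : ∀ i, i < R₀ → u i ≤ s)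
    (hsmall : (q:ℝ) * (2 * (2:ℝ)^(-(u R₀ : ℤ))) ≤ 1/2) (p : ℤ) :
    (2:ℝ)^((s:ℤ) - (u R₀:ℤ)) ≤ |(q:ℝ) * (∑' r, (2:ℝ)^(-(u r : ℤ))) - p| := by
  have hsumm := summable_two_zpow hu
  have hsplit := Summable.sum_add_tsum_nat_add (f := fun r => (2:ℝ)^(-(u r : ℤ))) R₀ hsumm
  set S := ∑ i ∈ Finset.range R₀, (2:ℝ)^(-(u i : ℤ)) with hS
  set T := ∑' i, (2:ℝ)^(-(u (i + R₀) : ℤ)) with hT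
  have hXe : (∑' r, (2:ℝ)^(-(u r : ℤ))) = S + T := hsplit.symm
  -- q * S is a natural number
  have hqS : (q:ℝ) * S = ((∑ i ∈ Finset.range R₀, 2^(s - u i) * w : ℕ) : ℝ) := by
    rw [hS, Finset.mul_sum]
    push_cast
    apply Finset.sum_congr rfl
    intro i hi
    have hle : u i ≤ s := hhead i (Finset.mem_range.1 hi)
    have : (q:ℝ) = (2:ℝ)^(s:ℕ) * w := by rw [hq]; push_cast; ring
    rw [this]
    rw [← zpow_natCast (2:ℝ) (s - u i), ← zpow_natCast (2:ℝ) s]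
    rw [Nat.cast_sub hle, zpow_sub₀ (by norm_num : (2:ℝ) ≠ 0)]
    field_simp
    rw [mul_assoc, ← zpow_add₀ (by norm_num : (2:ℝ) ≠ 0), neg_add_cancel, zpow_zero, mul_one]
  set m : ℕ := ∑ i ∈ Finset.range R₀, 2^(s - u i) * w with hm
  -- bounds on y := q * T
  have hq2s : (2:ℝ)^(s:ℕ) ≤ (q:ℝ) := by
    have hw1 : 1 ≤ w := by omega
    have : 2^s * 1 ≤ 2^s * w := Nat.mul_le_mul_left _ hw1
    have h2 : 2^s ≤ q := by omega
    exact_mod_cast h2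
  have hTge : (2:ℝ)^(-(u R₀ : ℤ)) ≤ T := tail_ge hu R₀
  have hTle : T ≤ 2 * (2:ℝ)^(-(u R₀ : ℤ)) := tail_le hu R₀
  have hq0 : (0:ℝ) < q := by
    have hw1 : 1 ≤ w := by omega
    have h2 := Nat.mul_le_mul (Nat.one_le_two_pow (n := s)) hw1
    have : 0 < q := by omega
    exact_mod_cast this
  have hyge : (2:ℝ)^((s:ℤ) - (u R₀:ℤ)) ≤ (q:ℝ) * T := by
    calc (2:ℝ)^((s:ℤ) - (u R₀:ℤ)) = (2:ℝ)^(s:ℕ) * (2:ℝ)^(-(u R₀ : ℤ)) := by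
          rw [sub_eq_add_neg, zpow_add₀ (by norm_num : (2:ℝ) ≠ 0), zpow_natCast]
      _ ≤ (q:ℝ) * T := by
          apply mul_le_mul hq2s hTge (by positivity) (le_of_lt hq0)
  have hyle : (q:ℝ) * T ≤ 1/2 :=
    le_trans (mul_le_mul_of_nonneg_left hTle (le_of_lt hq0)) hsmall
  rw [hXe, mul_add, hqS]
  rcases le_or_gt p m with hpm | hpm
  · have : ((m:ℝ) - p) + (q:ℝ) * T ≤ |((m:ℕ):ℝ) + (q:ℝ)*T - p| := by
      rw [abs_of_nonneg]
      · linarith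
      · have : (0:ℝ) ≤ (m:ℝ) - p := by
          have : (p:ℝ) ≤ (m:ℝ) := by exact_mod_cast hpm
          linarith
        linarith [mul_nonneg (le_of_lt hq0) (le_trans (by positivity) hTge)]
    have hmp : (0:ℝ) ≤ (m:ℝ) - p := by
      have : (p:ℝ) ≤ (m:ℝ) := by exact_mod_cast hpm
      linarith
    calc (2:ℝ)^((s:ℤ) - (u R₀:ℤ)) ≤ (q:ℝ) * T := hyge
      _ ≤ ((m:ℝ) - p) + (q:ℝ) * T := by linarith
      _ ≤ |((m:ℕ):ℝ) + (q:ℝ)*T - p| := this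
  · -- p ≥ m + 1
    have hpm1 : (m:ℝ) + 1 ≤ (p:ℝ) := by exact_mod_cast hpm
    have habs : 1 - (q:ℝ)*T ≤ |((m:ℕ):ℝ) + (q:ℝ)*T - p| := by
      rw [abs_sub_comm, abs_of_nonneg (by linarith [hyle])]
      linarith
    calc (2:ℝ)^((s:ℤ) - (u R₀:ℤ)) ≤ (q:ℝ) * T := hyge
      _ ≤ 1 - (q:ℝ)*T := by linarith
      _ ≤ |((m:ℕ):ℝ) + (q:ℝ)*T - p| := habs

lemma core3 (hu : StrictMono u) (R₀ W : ℕ) (hW : ∀ i, i < R₀ → u i ≤ W) :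
    ∃ p : ℤ, |(2:ℝ)^(W:ℕ) * (∑' r, (2:ℝ)^(-(u r : ℤ))) - p| ≤ 2 * (2:ℝ)^((W:ℤ) - (u R₀:ℤ)) := by
  have hsumm := summable_two_zpow hu
  have hsplit := Summable.sum_add_tsum_nat_add (f := fun r => (2:ℝ)^(-(u r : ℤ))) R₀ hsumm
  set S := ∑ i ∈ Finset.range R₀, (2:ℝ)^(-(u i : ℤ)) with hS
  set T := ∑' i, (2:ℝ)^(-(u (i + R₀) : ℤ)) with hT
  have hXe : (∑' r, (2:ℝ)^(-(u r : ℤ))) = S + T := hsplit.symm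
  have h2S : (2:ℝ)^(W:ℕ) * S = ((∑ i ∈ Finset.range R₀, 2^(W - u i) : ℕ) : ℝ) := by
    rw [hS, Finset.mul_sum]
    push_cast
    apply Finset.sum_congr rfl
    intro i hi
    have hle : u i ≤ W := hW i (Finset.mem_range.1 hi)
    rw [← zpow_natCast (2:ℝ) (W - u i), ← zpow_natCast (2:ℝ) W]
    rw [Nat.cast_sub hle, zpow_sub₀ (by norm_num : (2:ℝ) ≠ 0)]
    field_simp
    rw [← zpow_add₀ (by norm_num : (2:ℝ) ≠ 0), neg_add_cancel, zpow_zero]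
  refine ⟨((∑ i ∈ Finset.range R₀, 2^(W - u i) : ℕ) : ℤ), ?_⟩
  rw [hXe, mul_add, h2S]
  push_cast
  rw [add_sub_cancel_left]
  have hT0 : 0 ≤ T := tsum_nonneg (fun i => by positivity)
  rw [abs_of_nonneg (mul_nonneg (by positivity) hT0)]
  have hTle : T ≤ 2 * (2:ℝ)^(-(u R₀ : ℤ)) := tail_le hu R₀
  calc (2:ℝ)^(W:ℕ) * T ≤ (2:ℝ)^(W:ℕ) * (2 * (2:ℝ)^(-(u R₀ : ℤ))) :=
        mul_le_mul_of_nonneg_left hTle (by positivity)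
    _ = 2 * (2:ℝ)^((W:ℤ) - (u R₀:ℤ)) := by
        rw [← zpow_natCast (2:ℝ) W, sub_eq_add_neg, zpow_add₀ (by norm_num : (2:ℝ) ≠ 0)]
        ring

end Core

section E3
namespace Part2
open DySim Core
variable {n H : ℕ}

noncomputable def xiSim (n H : ℕ) : Fin n → ℝ :=
  fun j => ∑' r, (2:ℝ)^(-(seqc n H j r : ℤ))

lemma zpow2_le {a b : ℤ} (h : a ≤ b) : (2:ℝ)^a ≤ (2:ℝ)^b :=
  zpow_le_zpow_right₀ one_le_two h

lemma two_mul_zpow (a b : ℤ) : (2:ℝ)^a * (2 * (2:ℝ)^b) = (2:ℝ)^(a+b+1) := by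
  rw [zpow_add₀ (by norm_num : (2:ℝ) ≠ 0), zpow_add₀ (by norm_num : (2:ℝ) ≠ 0), zpow_one]
  ring

lemma two_zpow_half (x : ℤ) : 2 * (2:ℝ)^(x-1) = (2:ℝ)^x := by
  have h := zpow_add₀ (by norm_num : (2:ℝ) ≠ 0) (1:ℤ) (x-1)
  have he : (1:ℤ) + (x-1) = x := by ring
  rw [he] at h
  rw [h, zpow_one]

lemma nat_le_zpow {q E : ℕ} (h : q ≤ 2^E) : (q:ℝ) ≤ (2:ℝ)^(E:ℤ) := by
  have : ((q:ℕ):ℝ) ≤ ((2^E : ℕ):ℝ) := by exact_mod_cast h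
  calc (q:ℝ) ≤ ((2^E : ℕ):ℝ) := this
    _ = (2:ℝ)^(E:ℤ) := by push_cast; rw [zpow_natCast]

lemma tight (hn : 4 ≤ n) (hH : 5 ≤ H) (r : ℕ) {q : ℕ} (hq1 : 1 ≤ q)
    (hq2 : q ≤ 2^(Aseq n H r - 2)) (p : Fin n → ℤ) :
    ∃ j : Fin n, (2:ℝ)^(((n-1) * Kseq n H r : ℤ) - (Aseq n H r : ℤ))
      ≤ |(q:ℝ) * xiSim n H j - p j| := by
  have hH1 : 1 ≤ H := by omega
  have hKpos : 0 < Kseq n H r :=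
    lt_of_lt_of_le (by positivity) (K0_le_K hn r)
  have hAnK : n * Kseq n H r + H ≤ Aseq n H r := A_ge hn r
  have hAnK2 : Aseq n H r ≤ n * Kseq n H r + 2*H + 2 := A_le hn r
  have hA2 : 2 ≤ Aseq n H r := by nlinarith
  set K := Kseq n H r with hKdef
  set A := Aseq n H r with hAdef
  obtain ⟨s, w, hw, hq⟩ := Nat.exists_eq_pow_mul_and_not_dvd (show q ≠ 0 by omega) 2 (by norm_num)
  have hw1 : 1 ≤ w := by
    rcases Nat.eq_zero_or_pos w with h | h
    · exfalso; exact hw (h ▸ dvd_zero 2)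
    · exact h
  have h2s : 2^s ≤ q := by
    rw [hq]; exact Nat.le_mul_of_pos_right _ (by omega)
  have hsA : s ≤ A - 2 := by
    have h1 : 2^s ≤ 2^(A-2) := le_trans h2s hq2
    exact (Nat.pow_le_pow_iff_right (by norm_num)).mp h1
  have hcastA : ((A - 2 : ℕ) : ℤ) = (A:ℤ) - 2 := by omega
  rcases Nat.lt_or_ge s ((n-1)*K) with hcase | hcase
  · -- rung case
    set j₀ := s / K with hj₀def
    have hj₀K : j₀ * K ≤ s := by
      rw [hj₀def]; exact Nat.div_mul_le_self s K
    have hsj₀ : s < (j₀ + 1) * K := by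
      have hdm := Nat.div_add_mod s K
      rw [← hj₀def] at hdm
      have hmod := Nat.mod_lt s hKpos
      have e1 : (j₀+1)*K = j₀*K + K := by ring
      have e2 : K * j₀ = j₀ * K := by ring
      omega
    have hj₀ : j₀ ≤ n - 2 := by
      by_contra hcon
      have h1 : n - 1 ≤ j₀ := by omega
      have h2 : (n-1) * K ≤ j₀ * K := Nat.mul_le_mul_right _ h1
      omega
    have hj₀n : j₀ < n := by omega
    refine ⟨⟨j₀, hj₀n⟩, ?_⟩
    have hjval : ((⟨j₀, hj₀n⟩ : Fin n) : ℕ) = j₀ := rfl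
    have hjlt : ((⟨j₀, hj₀n⟩ : Fin n) : ℕ) < n - 1 := by rw [hjval]; omega
    have hu : StrictMono (seqc n H ⟨j₀, hj₀n⟩) := seqc_strictMono hn hH1 _
    have hur : seqc n H ⟨j₀, hj₀n⟩ r = (j₀+1) * K := by
      unfold seqc; rw [if_pos hjlt, hjval]
    have hur1 : seqc n H ⟨j₀, hj₀n⟩ (r+1) = (j₀+1) * Kseq n H (r+1) := by
      unfold seqc; rw [if_pos hjlt, hjval]
    have hsc : s < seqc n H ⟨j₀, hj₀n⟩ r := by rw [hur]; exact hsj₀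
    have hmain := core1 hu r hq hw hsc (p ⟨j₀, hj₀n⟩)
    have hxieq : xiSim n H ⟨j₀, hj₀n⟩ = ∑' i, (2:ℝ)^(-(seqc n H ⟨j₀, hj₀n⟩ i : ℤ)) := rfl
    rw [hxieq]
    refine le_trans ?_ hmain
    rw [hur, hur1]
    -- numeric part
    have hc' : 2*A + 2 ≤ (j₀+1) * Kseq n H (r+1) := by
      have h1 : Kseq n H (r+1) ≤ (j₀+1) * Kseq n H (r+1) := Nat.le_mul_of_pos_left _ (by omega)
      have h2 := A_le_Ksucc (H := H) hn r
      omega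
    have hcA : (j₀+1) * K ≤ A := by
      have h1 : (j₀+1) * K ≤ (n-1) * K := Nat.mul_le_mul_right _ (by omega)
      have h2 : (n-1)*K ≤ n*K := Nat.mul_le_mul_right _ (by omega)
      omega
    have hqb : (q:ℝ) * (2 * (2:ℝ)^(-((j₀+1) * Kseq n H (r+1) : ℤ)))
        ≤ (2:ℝ)^((s:ℤ) - ((j₀+1) * K : ℤ) - 1) := by
      calc (q:ℝ) * (2 * (2:ℝ)^(-((j₀+1) * Kseq n H (r+1) : ℤ)))
          ≤ (2:ℝ)^(((A-2:ℕ)):ℤ) * (2 * (2:ℝ)^(-((j₀+1) * Kseq n H (r+1) : ℤ))) := by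
            apply mul_le_mul_of_nonneg_right (nat_le_zpow hq2) (by positivity)
        _ = (2:ℝ)^(((A-2:ℕ):ℤ) + (-((j₀+1) * Kseq n H (r+1) : ℤ)) + 1) := two_mul_zpow _ _
        _ ≤ (2:ℝ)^((s:ℤ) - ((j₀+1) * K : ℤ) - 1) := by
            apply zpow2_le
            rw [hcastA]
            have c1 : ((j₀+1) * Kseq n H (r+1) : ℤ) ≥ 2*(A:ℤ) + 2 := by exact_mod_cast hc'
            have c2 : ((j₀+1) * K : ℤ) ≤ (A:ℤ) := by exact_mod_cast hcA
            omega
    have hlow : (2:ℝ)^(((n-1) * K : ℤ) - (A:ℤ)) ≤ (2:ℝ)^((s:ℤ) - ((j₀+1) * K : ℤ) - 1) := by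
      apply zpow2_le
      have c1 : ((j₀ * K : ℕ) : ℤ) ≤ (s:ℤ) := by exact_mod_cast hj₀K
      have c2 : ((j₀+1) * K :ℤ) = (j₀ * K : ℕ) + (K:ℤ) := by push_cast; ring
      have c3' : (n-1) * K + K + H ≤ A := by
        have e1 : (n-1)*K + K = n*K := by
          have e2 : (n-1)*K = n*K - K := by rw [Nat.sub_mul, one_mul]
          have h7 : K ≤ n*K := Nat.le_mul_of_pos_left _ (by omega)
          omega
        omega
      have c3 : ((n:ℤ)-1) * (K:ℤ) + (K:ℤ) + (H:ℤ) ≤ (A:ℤ) := by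
        zify [show 1 ≤ n by omega] at c3'
        linarith
      have c4 : (5:ℤ) ≤ H := by exact_mod_cast hH
      have c5 : ((n:ℤ)-1) * (K:ℤ) = ((n-1) * K : ℤ) := by norm_num
      omega
    calc (2:ℝ)^(((n-1) * K : ℤ) - (A:ℤ))
        ≤ (2:ℝ)^((s:ℤ) - ((j₀+1) * K : ℤ) - 1) := hlow
      _ ≤ (2:ℝ)^((s:ℤ) - ((j₀+1) * K : ℤ)) - (2:ℝ)^((s:ℤ) - ((j₀+1) * K : ℤ) - 1) := by
          have h := two_zpow_half ((s:ℤ) - ((j₀+1) * K : ℤ))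
          linarith
      _ ≤ (2:ℝ)^((s:ℤ) - ((j₀+1) * K : ℤ)) - (q:ℝ) * (2 * (2:ℝ)^(-((j₀+1) * Kseq n H (r+1) : ℤ))) := by
          linarith [hqb]
  · -- spare case
    have hnn : n - 1 < n := by omega
    refine ⟨⟨n-1, hnn⟩, ?_⟩
    have hjval : ((⟨n-1, hnn⟩ : Fin n) : ℕ) = n - 1 := rfl
    have hjge : ¬ (((⟨n-1, hnn⟩ : Fin n) : ℕ) < n - 1) := by rw [hjval]; omega
    have hu : StrictMono (seqc n H ⟨n-1, hnn⟩) := seqc_strictMono hn hH1 _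
    have hueq : ∀ i, seqc n H ⟨n-1, hnn⟩ i = Espare n H i := by
      intro i; unfold seqc; rw [if_neg hjge]
    have huR₀ : seqc n H ⟨n-1, hnn⟩ (2*n*r) = A := by
      rw [hueq, show 2*n*r = 2*n*r + 0 by ring, Espare_eq hn r 0 (by omega)]
      simp only [Function.iterate_zero_apply]
      exact hAdef.symm
    have hhead : ∀ i, i < 2*n*r → seqc n H ⟨n-1, hnn⟩ i ≤ s := by
      intro i hi
      rw [hueq]
      rcases Nat.eq_zero_or_pos r with hr | hr
      · exfalso; rw [hr, Nat.mul_zero] at hi; omega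
      · obtain ⟨r', rfl⟩ : ∃ r', r = r' + 1 := ⟨r - 1, by omega⟩
        have he : 2*n*(r'+1) = 2*n*r' + 2*n := by ring
        have h1 : Espare n H i ≤ Espare n H (2*n*r' + (2*n - 1)) := by
          apply (strictMono_nat_of_lt_succ (Espare_lt hn hH1)).monotone
          omega
        have h2 : Espare n H (2*n*r' + (2*n-1)) = (cN n H)^[2*n-1] (Aseq n H r') :=
          Espare_eq hn r' (2*n-1) (by omega)
        have h3 : cN n H ((cN n H)^[2*n-1] (Aseq n H r')) = Kseq n H (r'+1) := by
          have e : (2*n-1)+1 = 2*n := by omega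
          calc cN n H ((cN n H)^[2*n-1] (Aseq n H r'))
              = (cN n H)^[(2*n-1)+1] (Aseq n H r') := (Function.iterate_succ_apply' _ _ _).symm
            _ = (cN n H)^[2*n] (Aseq n H r') := by rw [e]
            _ = Kseq n H (r'+1) := rfl
        have h4 : Espare n H (2*n*r' + (2*n-1)) < Kseq n H (r'+1) := by
          rw [h2, ← h3]
          exact cN_gt hn hH1 _
        have h4' : Espare n H (2*n*r' + (2*n-1)) < K := by rw [hKdef]; exact h4
        have h5' : K ≤ (n-1) * K := Nat.le_mul_of_pos_left _ (by omega)
        omega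
    have hsmall : (q:ℝ) * (2 * (2:ℝ)^(-(seqc n H ⟨n-1, hnn⟩ (2*n*r) : ℤ))) ≤ 1/2 := by
      rw [huR₀]
      calc (q:ℝ) * (2 * (2:ℝ)^(-(A : ℤ)))
          ≤ (2:ℝ)^(((A-2:ℕ)):ℤ) * (2 * (2:ℝ)^(-(A : ℤ))) := by
            apply mul_le_mul_of_nonneg_right (nat_le_zpow hq2) (by positivity)
        _ = (2:ℝ)^(((A-2:ℕ):ℤ) + (-(A:ℤ)) + 1) := two_mul_zpow _ _
        _ ≤ (2:ℝ)^(-1 : ℤ) := by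
            apply zpow2_le
            rw [hcastA]; omega
        _ = 1/2 := by norm_num
    have hmain := core2 hu (2*n*r) hq hw hhead hsmall (p ⟨n-1, hnn⟩)
    have hxieq : xiSim n H ⟨n-1, hnn⟩ = ∑' i, (2:ℝ)^(-(seqc n H ⟨n-1, hnn⟩ i : ℤ)) := rfl
    rw [hxieq]
    refine le_trans ?_ hmain
    rw [huR₀]
    apply zpow2_le
    have c1 : (((n-1) * K : ℕ) : ℤ) ≤ (s:ℤ) := by exact_mod_cast hcase
    have c5 : ((n:ℤ)-1) * (K:ℤ) = (((n-1) * K : ℕ) : ℤ) := by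
      push_cast [Nat.cast_sub (show 1 ≤ n by omega)]
      ring
    omega

end Part2
end E3

namespace Part2
open DySim Core Filter

variable {n H : ℕ}

lemma upper_anchor (hn : 4 ≤ n) (hH : 5 ≤ H) (m : ℕ) (j : Fin n) :
    ∃ p : ℤ, |(2:ℝ)^(Wseq n H m) * xiSim n H j - p|
      ≤ 2 * (2:ℝ)^((Wseq n H m : ℤ) - (Wseq n H (m+1) : ℤ)) := by
  classical
  have hH1 : 1 ≤ H := by omega
  have hu := seqc_strictMono (H := H) hn hH1 j
  have hex : ∃ i, Wseq n H m < seqc n H j i := by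
    refine ⟨Wseq n H m + 1, ?_⟩
    have h1 : Wseq n H m + 1 ≤ seqc n H j (Wseq n H m + 1) := hu.le_apply
    omega
  set R₀ := Nat.find hex with hR₀
  have hWlt : Wseq n H m < seqc n H j R₀ := Nat.find_spec hex
  have hW : ∀ i, i < R₀ → seqc n H j i ≤ Wseq n H m := by
    intro i hi
    have := Nat.find_min hex hi
    omega
  obtain ⟨p, hp⟩ := core3 hu R₀ (Wseq n H m) hW
  refine ⟨p, le_trans hp ?_⟩
  have hnext : Wseq n H (m+1) ≤ seqc n H j R₀ := by
    obtain ⟨m', hm'⟩ := seqc_mem_W (H := H) hn j R₀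
    rw [hm'] at hWlt ⊢
    have hmono := Wseq_strictMono (n := n) (H := H) hn hH1
    have h1 : m < m' := hmono.lt_iff_lt.mp hWlt
    exact hmono.monotone h1
  apply mul_le_mul_of_nonneg_left _ (by norm_num)
  apply zpow2_le
  have h2 : (Wseq n H (m+1) : ℤ) ≤ (seqc n H j R₀ : ℤ) := by exact_mod_cast hnext
  omega

lemma psi_upper (hn : 4 ≤ n) (hH : 5 ≤ H) (m : ℕ) {t : ℝ}
    (ht : ((2:ℝ)^(Wseq n H m) : ℝ) ≤ t) :
    psiSim n (xiSim n H) t ≤ 2 * (2:ℝ)^((Wseq n H m : ℤ) - (Wseq n H (m+1) : ℤ)) := by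
  have hn0 : 0 < n := by omega
  choose p hp using upper_anchor (H := H) hn hH m
  have hb1 : ((2^(Wseq n H m) : ℤ)) ≠ 0 := by positivity
  have habs : |((2^(Wseq n H m) : ℤ) : ℝ)| ≤ t := by
    push_cast
    rw [abs_of_pos (by positivity)]
    exact ht
  refine le_trans (psiSim_le hn0 hb1 habs (b := fun j => -(p j))) ?_
  haveI : Nonempty (Fin n) := ⟨⟨0, hn0⟩⟩
  apply ciSup_le
  intro j
  have h1 := hp j
  have heq : |xiSim n H j * ((2^(Wseq n H m) : ℤ) : ℝ) + ((-(p j) : ℤ) : ℝ)|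
      = |(2:ℝ)^(Wseq n H m) * xiSim n H j - p j| := by
    congr 1
    push_cast
    ring
  rw [heq]
  exact h1

lemma f_upper (hn : 4 ≤ n) (hH : 5 ≤ H) {t : ℝ}
    (ht : ((2:ℝ)^(Wseq n H 0) : ℝ) ≤ t) :
    t ^ ((1:ℝ)/(n:ℝ)) * psiSim n (xiSim n H) t ≤ (2:ℝ) ^ ((1:ℝ) - (H:ℝ)) := by
  classical
  have hn0 : 0 < n := by omega
  have hH1 : 1 ≤ H := by omega
  have ht0 : (0:ℝ) < t := lt_of_lt_of_le (by positivity) ht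
  set P : ℕ → Prop := fun m => ((2:ℝ)^(Wseq n H m) : ℝ) ≤ t with hPdef
  have hP0 : P 0 := ht
  set b := ⌊t⌋₊ with hb
  set m := Nat.findGreatest P b with hm
  have hPm : P m := Nat.findGreatest_spec (Nat.zero_le b) hP0
  have hup : t < (2:ℝ)^(Wseq n H (m+1)) := by
    rcases le_or_gt (m+1) b with h | h
    · have hnp : ¬ P (m+1) := Nat.findGreatest_is_greatest (Nat.lt_succ_self m) h
      exact not_le.mp hnp
    · have h2 : m + 1 ≤ Wseq n H (m+1) := (Wseq_strictMono hn hH1).le_apply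
      have h3 : Wseq n H (m+1) < 2^(Wseq n H (m+1)) := Nat.lt_two_pow_self
      have h5 : b + 2 ≤ 2^(Wseq n H (m+1)) := by omega
      have h6 : ((b:ℝ) + 2) ≤ ((2^(Wseq n H (m+1)) : ℕ) : ℝ) := by exact_mod_cast h5
      have h4 : (t:ℝ) < (b:ℝ) + 1 := Nat.lt_floor_add_one t
      push_cast at h6
      linarith
  set w := Wseq n H m with hw
  set w' := Wseq n H (m+1) with hw'
  have hpsi := psi_upper hn hH m hPm
  have hq : n * (w + H) ≤ (n-1) * w' :=
    le_trans (cN_ge hn w) (Nat.mul_le_mul_left _ (Wstep hn m))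
  have hnR : (0:ℝ) < (n:ℝ) := by exact_mod_cast hn0
  have hc : (n:ℝ) * ((w:ℝ) + H) ≤ ((n:ℝ)-1) * w' := by
    have hcast : ((n-1:ℕ):ℝ) = (n:ℝ)-1 := by
      push_cast [Nat.cast_sub (by omega : 1 ≤ n)]
      ring
    calc (n:ℝ) * ((w:ℝ) + H) = (((n * (w + H)) : ℕ) : ℝ) := by push_cast; ring
      _ ≤ (((n-1) * w' : ℕ):ℝ) := by exact_mod_cast hq
      _ = ((n:ℝ)-1) * w' := by rw [← hcast]; push_cast; ring
  have han : (1/(n:ℝ)) * n = 1 := by field_simp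
  have hkey : (w':ℝ) * (1/(n:ℝ)) + 1 + ((w:ℝ) - w') ≤ 1 - H := by
    nlinarith [hc, han, hnR]
  have e1 : ((2:ℝ)^(w' : ℕ)) ^ ((1:ℝ)/(n:ℝ)) = (2:ℝ) ^ ((w':ℝ) * (1/(n:ℝ))) := by
    rw [← Real.rpow_natCast 2 w', ← Real.rpow_mul (by norm_num)]
  have e2 : (2:ℝ)^((w : ℤ) - (w' : ℤ)) = (2:ℝ) ^ ((w:ℝ) - (w':ℝ)) := by
    rw [← Real.rpow_intCast 2 ((w:ℤ) - (w':ℤ))]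
    push_cast
    ring_nf
  have e3 : (2:ℝ) ^ ((w':ℝ) * (1/(n:ℝ))) * (2 * (2:ℝ) ^ ((w:ℝ) - (w':ℝ)))
      = (2:ℝ) ^ ((w':ℝ) * (1/(n:ℝ)) + 1 + ((w:ℝ) - (w':ℝ))) := by
    rw [Real.rpow_add (by norm_num : (0:ℝ) < 2), Real.rpow_add (by norm_num : (0:ℝ) < 2),
      Real.rpow_one]
    ring
  calc t ^ ((1:ℝ)/(n:ℝ)) * psiSim n (xiSim n H) t
      ≤ ((2:ℝ)^(w' : ℕ)) ^ ((1:ℝ)/(n:ℝ)) * (2 * (2:ℝ)^((w : ℤ) - (w' : ℤ))) := by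
        apply mul_le_mul
        · exact Real.rpow_le_rpow (le_of_lt ht0) (le_of_lt hup) (by positivity)
        · exact hpsi
        · exact psiSim_nonneg hn0
        · positivity
    _ = (2:ℝ) ^ ((w':ℝ) * (1/(n:ℝ)) + 1 + ((w:ℝ) - (w':ℝ))) := by rw [e1, e2, e3]
    _ ≤ (2:ℝ) ^ ((1:ℝ) - (H:ℝ)) := by
        apply (Real.rpow_le_rpow_left_iff (by norm_num : (1:ℝ) < 2)).mpr
        exact hkey

end Part2
namespace Part2
open DySim Core Filter

variable {n H : ℕ}

lemma f_lower (hn : 4 ≤ n) (hH : 5 ≤ H) (r : ℕ) :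
    (2:ℝ) ^ (-(2*(H:ℝ)) - 2)
      ≤ ((2:ℝ)^(Aseq n H r - 2 : ℕ)) ^ ((1:ℝ)/(n:ℝ))
        * psiSim n (xiSim n H) ((2:ℝ)^(Aseq n H r - 2 : ℕ)) := by
  have hn0 : 0 < n := by omega
  have hKpos : 0 < Kseq n H r := lt_of_lt_of_le (by positivity) (K0_le_K hn r)
  have hAnK : n * Kseq n H r + H ≤ Aseq n H r := A_ge hn r
  have hAnK2 : Aseq n H r ≤ n * Kseq n H r + 2*H + 2 := A_le hn r
  set K := Kseq n H r with hKdef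
  set A := Aseq n H r with hAdef
  have hA2 : 2 ≤ A := by nlinarith
  haveI : Nonempty (Fin n) := ⟨⟨0, hn0⟩⟩
  have hpsi : (2:ℝ)^(((n:ℤ)-1) * (K:ℤ) - (A:ℤ))
      ≤ psiSim n (xiSim n H) ((2:ℝ)^(A - 2 : ℕ)) := by
    apply le_psiSim hn0
    · exact one_le_pow₀ (by norm_num)
    · intro b1 b hb1 hb2
      set q := b1.natAbs with hqdef
      have hq1 : 1 ≤ q := by
        have := Int.natAbs_pos.mpr hb1
        omega
      have hqcast : ((q:ℕ):ℝ) = |(b1:ℝ)| := by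
        rw [hqdef, Nat.cast_natAbs]
        exact Int.cast_abs
      have hq2 : q ≤ 2^(A - 2) := by
        have h1 : ((q:ℕ):ℝ) ≤ ((2^(A-2) : ℕ):ℝ) := by
          rw [hqcast]
          push_cast
          exact hb2
        exact_mod_cast h1
      obtain ⟨j, hj⟩ := tight hn hH r hq1 hq2 (p := fun j => if 0 < b1 then -(b j) else b j)
      rw [← hKdef, ← hAdef] at hj
      refine le_trans hj ?_
      · have heq : |(q:ℝ) * xiSim n H j - ((if 0 < b1 then -(b j) else b j : ℤ) : ℝ)|
            = |xiSim n H j * (b1:ℝ) + ((b j : ℤ):ℝ)| := by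
          rcases lt_trichotomy b1 0 with h | h | h
          · rw [if_neg (by omega)]
            have hbq : ((q:ℕ):ℝ) = -(b1:ℝ) := by
              rw [hqcast, abs_of_neg (by exact_mod_cast h : ((b1:ℝ) < 0))]
            rw [show (q:ℝ) * xiSim n H j - ((b j : ℤ):ℝ)
                = -(xiSim n H j * (b1:ℝ) + ((b j : ℤ):ℝ)) by rw [show ((q:ℕ):ℝ) = -(b1:ℝ) from hbq]; push_cast; ring]
            exact abs_neg _
          · exact absurd h hb1
          · rw [if_pos h]
            have hbq : ((q:ℕ):ℝ) = (b1:ℝ) := by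
              rw [hqcast, abs_of_pos (by exact_mod_cast h : ((0:ℝ) < (b1:ℝ)))]
            congr 1
            rw [show ((q:ℕ):ℝ) = ((b1:ℤ):ℝ) from hbq]
            push_cast
            ring
        rw [heq]
        exact le_ciSup (f := fun j => |xiSim n H j * (b1:ℝ) + ((b j : ℤ):ℝ)|)
          (Set.Finite.bddAbove (Set.finite_range _)) j
  -- combine with the rpow factor
  have e4 : ((2:ℝ)^(A - 2 : ℕ)) ^ ((1:ℝ)/(n:ℝ)) = (2:ℝ) ^ (((A-2:ℕ):ℝ) * (1/(n:ℝ))) := by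
    rw [← Real.rpow_natCast 2 (A-2), ← Real.rpow_mul (by norm_num)]
  have e5 : (2:ℝ)^(((n:ℤ)-1) * (K:ℤ) - (A:ℤ))
      = (2:ℝ) ^ ((((n:ℝ)-1) * (K:ℝ) - (A:ℝ))) := by
    rw [← Real.rpow_intCast 2 (((n:ℤ)-1) * (K:ℤ) - (A:ℤ))]
    push_cast
    ring_nf
  have hnR : (0:ℝ) < (n:ℝ) := by exact_mod_cast hn0
  have han : (1/(n:ℝ)) * n = 1 := by field_simp
  have hcA : ((A-2:ℕ):ℝ) = (A:ℝ) - 2 := by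
    push_cast [Nat.cast_sub hA2]
    ring
  have hAK1 : (n:ℝ) * K + H ≤ (A:ℝ) := by exact_mod_cast hAnK
  have hAK2 : (A:ℝ) ≤ (n:ℝ) * K + 2*H + 2 := by exact_mod_cast hAnK2
  have hH5 : (5:ℝ) ≤ (H:ℝ) := by exact_mod_cast hH
  calc (2:ℝ) ^ (-(2*(H:ℝ)) - 2)
      ≤ (2:ℝ) ^ (((A-2:ℕ):ℝ) * (1/(n:ℝ)) + (((n:ℝ)-1) * (K:ℝ) - (A:ℝ))) := by
        apply (Real.rpow_le_rpow_left_iff (by norm_num : (1:ℝ) < 2)).mpr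
        rw [hcA]
        have hdiv : (K:ℝ) ≤ ((A:ℝ) - 2) * (1/(n:ℝ)) := by
          rw [mul_one_div, le_div_iff₀ hnR]
          nlinarith
        nlinarith
    _ = ((2:ℝ)^(A - 2 : ℕ)) ^ ((1:ℝ)/(n:ℝ)) * (2:ℝ)^(((n:ℤ)-1) * (K:ℤ) - (A:ℤ)) := by
        rw [e4, e5, ← Real.rpow_add (by norm_num : (0:ℝ) < 2)]
    _ ≤ ((2:ℝ)^(A - 2 : ℕ)) ^ ((1:ℝ)/(n:ℝ)) * psiSim n (xiSim n H) ((2:ℝ)^(A - 2 : ℕ)) := by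
        apply mul_le_mul_of_nonneg_left hpsi (by positivity)

lemma theta_bounds (hn : 4 ≤ n) (hH : 5 ≤ H) :
    0 < ThetaSim n (xiSim n H) ∧ ThetaSim n (xiSim n H) ≤ (2:ℝ) ^ ((1:ℝ) - (H:ℝ)) := by
  have hn0 : 0 < n := by omega
  have hH1 : 1 ≤ H := by omega
  set f : ℝ → ℝ := fun t => t ^ ((1:ℝ)/(n:ℝ)) * psiSim n (xiSim n H) t with hf
  have hupper_ev : ∀ᶠ t : ℝ in atTop, f t ≤ (2:ℝ) ^ ((1:ℝ) - (H:ℝ)) := by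
    filter_upwards [eventually_ge_atTop ((2:ℝ)^(Wseq n H 0))] with t ht
    exact f_upper hn hH ht
  have hbdd : IsBoundedUnder (· ≤ ·) atTop f := isBoundedUnder_of_eventually_le hupper_ev
  have hnonneg_ev : ∀ᶠ t : ℝ in atTop, (0:ℝ) ≤ f t := by
    filter_upwards [eventually_ge_atTop (0:ℝ)] with t ht
    exact mul_nonneg (Real.rpow_nonneg ht _) (psiSim_nonneg hn0)
  have hcob : IsCoboundedUnder (· ≤ ·) atTop f :=
    isCoboundedUnder_le_of_eventually_le atTop hnonneg_ev
  have hfreq : ∃ᶠ t in atTop, (2:ℝ) ^ (-(2*(H:ℝ)) - 2) ≤ f t := by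
    rw [frequently_atTop]
    intro a
    set r := ⌈a⌉₊ with hr
    refine ⟨(2:ℝ)^(Aseq n H r - 2 : ℕ), ?_, f_lower hn hH r⟩
    have h1 : r ≤ Aseq n H r - 2 := by
      have h2 : n * Kseq n H r + H ≤ Aseq n H r := A_ge hn r
      have h3 : r ≤ Kseq n H r := (K_strictMono (H := H) hn).le_apply
      have h4 : Kseq n H r ≤ n * Kseq n H r := Nat.le_mul_of_pos_left _ (by omega)
      omega
    have h5 : Aseq n H r - 2 < 2^(Aseq n H r - 2) := Nat.lt_two_pow_self
    have h6 : (r:ℝ) ≤ ((2^(Aseq n H r - 2) : ℕ):ℝ) := by exact_mod_cast (by omega : r ≤ 2^(Aseq n H r - 2))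
    have h7 : a ≤ (r:ℝ) := Nat.le_ceil a
    push_cast at h6
    linarith
  constructor
  · have hle := le_limsup_of_frequently_le hfreq hbdd
    calc (0:ℝ) < (2:ℝ) ^ (-(2*(H:ℝ)) - 2) := Real.rpow_pos_of_pos (by norm_num) _
      _ ≤ ThetaSim n (xiSim n H) := hle
  · exact limsup_le_of_le hcob hupper_ev

end Part2

/-- the spectrum accumulates at 0 -/
lemma spectrum_near_zero {n : ℕ} (hn : 4 ≤ n) {ε : ℝ} (hε : 0 < ε) :
    ∃ ξ : Fin n → ℝ, 0 < ThetaSim n ξ ∧ ThetaSim n ξ < ε := by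
  obtain ⟨k, hk⟩ := exists_pow_lt_of_lt_one hε (by norm_num : (1/2 : ℝ) < 1)
  refine ⟨Part2.xiSim n (k + 5), ?_, ?_⟩
  · exact (Part2.theta_bounds (H := k+5) hn (by omega)).1
  · have h1 := (Part2.theta_bounds (H := k+5) hn (by omega)).2
    have h2 : (2:ℝ) ^ ((1:ℝ) - ((k + 5 : ℕ):ℝ)) < (1/2:ℝ)^k := by
      have e1 : (1/2:ℝ)^k = (2:ℝ) ^ (-(k:ℝ)) := by
        rw [one_div, inv_pow, ← Real.rpow_natCast 2 k,
          ← Real.rpow_neg (by norm_num : (0:ℝ) ≤ 2)]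
      rw [e1]
      apply Real.rpow_lt_rpow_left_iff (by norm_num : (1:ℝ) < 2) |>.mpr
      push_cast
      linarith
    linarith

lemma spectrum_infinite {n : ℕ} (hn : 4 ≤ n) :
    {y : ℝ | ∃ ξ : Fin n → ℝ, ThetaSim n ξ = y}.Infinite := by
  by_contra h
  have hfin : {y : ℝ | ∃ ξ : Fin n → ℝ, ThetaSim n ξ = y}.Finite := Set.not_infinite.mp h
  set T := {y : ℝ | (∃ ξ : Fin n → ℝ, ThetaSim n ξ = y) ∧ 0 < y} with hT
  have hTfin : T.Finite := hfin.subset (fun y hy => hy.1)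
  have hTne : T.Nonempty := by
    obtain ⟨ξ, h1, h2⟩ := spectrum_near_zero hn one_pos
    exact ⟨ThetaSim n ξ, ⟨ξ, rfl⟩, h1⟩
  obtain ⟨μ, hμT, hμmin⟩ := Set.exists_min_image T id hTfin hTne
  obtain ⟨ξ', h1', h2'⟩ := spectrum_near_zero hn hμT.2
  have : μ ≤ ThetaSim n ξ' := hμmin _ ⟨⟨ξ', rfl⟩, h1'⟩
  linarith

/-- for `n ≥ 4`, `dim_H FS_n^* ≥ n − 2`; moreover the simultaneous
Dirichlet spectrum `{Θ^*(ξ) : ξ ∈ ℝⁿ}` accumulates at `0`, in particular it is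
not finite. -/
theorem dimH_FSsim_ge (n : ℕ) (hn : 4 ≤ n) :
    ((n - 2 : ℕ) : ℝ≥0∞) ≤ dimH (FSsim n) ∧
    (∀ ε : ℝ, 0 < ε → ∃ ξ : Fin n → ℝ, 0 < ThetaSim n ξ ∧ ThetaSim n ξ < ε) ∧
    {y : ℝ | ∃ ξ : Fin n → ℝ, ThetaSim n ξ = y}.Infinite := by
  exact ⟨dimH_FSsim hn, fun ε hε => spectrum_near_zero hn hε, spectrum_infinite hn⟩
end

section
/- Let a, b, c be real numbers with a > 0, b > 0 and a, b linearly independent over ℚ. Then the set Z = {k₁a + k₂b + c : k₁, k₂ ∈ ℕ} becomes arbitrarily dense towards infinity: ordering Z increasingly as a sequence (z_i)_{i≥1}, the consecutive gaps satisfy |z_{i+1} − z_i| → 0; equivalently, for every ε > 0 there exists T such that every x ≥ T lies within distance ε of some element of Z. -/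
lemma key_step (a b c ε g : ℝ) (ha : 0 < a) (hb : 0 < b)
    (m n : ℕ) (hg : g = (m : ℝ) * a - (n : ℝ) * b)
    (hg0 : 0 < g) (hge : g ≤ ε) (hm : 0 < m) :
    ∃ T : ℝ, ∀ x : ℝ, T ≤ x → ∃ k1 k2 : ℕ, 0 < k1 ∧ 0 < k2 ∧
      |x - ((k1 : ℝ) * a + (k2 : ℝ) * b + c)| ≤ ε := by
  obtain ⟨J, hJg⟩ : ∃ J : ℕ, b ≤ (J : ℝ) * g := by
    refine ⟨⌈b / g⌉₊, ?_⟩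
    have h := mul_le_mul_of_nonneg_right (Nat.le_ceil (b/g)) hg0.le
    rwa [div_mul_cancel₀ _ hg0.ne'] at h
  refine ⟨c + ((J * n + 1 : ℕ) + 1 : ℝ) * b + g, fun x hx => ?_⟩
  -- choose L : ℕ with J*n+1 ≤ L and g ≤ x - c - L*b < g + b
  obtain ⟨L, hLge, hs1, hs2⟩ : ∃ L : ℕ, J * n + 1 ≤ L ∧ g ≤ x - c - (L : ℝ) * b ∧
      x - c - (L : ℝ) * b < g + b := by
    set Lz : ℤ := ⌊(x - c - g) / b⌋ with hLz
    have hLzge : ((J * n + 1 : ℕ) : ℤ) ≤ Lz := by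
      have h1 : (((J * n + 1 : ℕ) : ℝ) + 1) ≤ (x - c - g) / b := by
        rw [le_div_iff₀ hb]; nlinarith
      exact_mod_cast Int.le_floor.mpr (le_trans (by push_cast; linarith) h1)
    have hfl1 : (Lz : ℝ) * b ≤ x - c - g := by
      have h := Int.floor_le ((x - c - g) / b)
      rw [← hLz] at h
      nlinarith [mul_le_mul_of_nonneg_right h hb.le, div_mul_cancel₀ (x - c - g) hb.ne']
    have hfl2 : x - c - g < ((Lz : ℝ) + 1) * b := by
      have h := Int.lt_floor_add_one ((x - c - g) / b)
      rw [← hLz] at h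
      nlinarith [mul_lt_mul_of_pos_right h hb, div_mul_cancel₀ (x - c - g) hb.ne']
    refine ⟨Lz.toNat, by omega, ?_, ?_⟩ <;>
    · have hc : ((Lz.toNat : ℕ) : ℝ) = (Lz : ℝ) := by
        exact_mod_cast congrArg Int.cast (Int.toNat_of_nonneg (le_trans (by positivity) hLzge))
      rw [hc]; linarith
  set s : ℝ := x - c - (L : ℝ) * b with hs
  -- choose j : ℕ with 1 ≤ j ≤ J and j*g ≤ s < (j+1)*g
  obtain ⟨j, hj1, hjJ, hjg, hjg2⟩ : ∃ j : ℕ, 1 ≤ j ∧ j ≤ J ∧ (j : ℝ) * g ≤ s ∧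
      s < ((j : ℝ) + 1) * g := by
    refine ⟨⌊s / g⌋₊, ?_, ?_, ?_, ?_⟩
    · apply Nat.le_floor
      rw [Nat.cast_one, le_div_iff₀ hg0]; linarith
    · have h1 : (⌊s / g⌋₊ : ℝ) ≤ s / g := Nat.floor_le (div_nonneg (by linarith) hg0.le)
      have h2 : s / g < (J : ℝ) + 1 := by rw [div_lt_iff₀ hg0]; nlinarith
      have h3 : (⌊s / g⌋₊ : ℝ) < (J : ℝ) + 1 := lt_of_le_of_lt h1 h2
      exact_mod_cast Nat.lt_add_one_iff.mp (by exact_mod_cast h3)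
    · have h1 : (⌊s / g⌋₊ : ℝ) ≤ s / g := Nat.floor_le (div_nonneg (by linarith) hg0.le)
      nlinarith [mul_le_mul_of_nonneg_right h1 hg0.le, div_mul_cancel₀ s hg0.ne']
    · have h1 := Nat.lt_floor_add_one (s / g)
      nlinarith [mul_lt_mul_of_pos_right h1 hg0, div_mul_cancel₀ s hg0.ne']
  have hjnL : j * n < L := by
    have : j * n ≤ J * n := Nat.mul_le_mul_right n hjJ
    omega
  refine ⟨j * m, L - j * n, by positivity, by omega, ?_⟩
  have hcast2 : ((L - j * n : ℕ) : ℝ) = (L : ℝ) - (j : ℝ) * (n : ℝ) := by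
    push_cast [Nat.cast_sub hjnL.le]; ring
  have hval : x - (((j * m : ℕ) : ℝ) * a + ((L - j * n : ℕ) : ℝ) * b + c) = s - (j : ℝ) * g := by
    rw [hcast2, hg, hs]; push_cast; ring
  rw [hval, abs_le]
  constructor <;> nlinarith


/-- if `a, b > 0` are linearly independent over `ℚ` and `c ∈ ℝ`, then
the set `Z = {k₁a + k₂b + c : k₁, k₂ positive integers}` becomes arbitrarily dense
towards infinity: for every `ε > 0` there exists `T` such that every `x ≥ T` lies
within distance `ε` of some element of `Z`. -/
theorem dense_towards_infinity (a b c : ℝ) (ha : 0 < a) (hb : 0 < b)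
    (hind : ∀ q1 q2 : ℚ, (q1 : ℝ) * a + (q2 : ℝ) * b = 0 → q1 = 0 ∧ q2 = 0) :
    ∀ ε : ℝ, 0 < ε → ∃ T : ℝ, ∀ x : ℝ, T ≤ x →
      ∃ k1 k2 : ℕ, 0 < k1 ∧ 0 < k2 ∧
        |x - ((k1 : ℝ) * a + (k2 : ℝ) * b + c)| ≤ ε := by
  intro ε hε
  -- The subgroup generated by a and b is dense
  have hdense : Dense ((AddSubgroup.closure {a, b} : AddSubgroup ℝ) : Set ℝ) := by
    rcases AddSubgroup.dense_or_cyclic (AddSubgroup.closure {a, b}) with h | ⟨g0, hg0⟩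
    · exact h
    · exfalso
      have haS : a ∈ AddSubgroup.closure ({a, b} : Set ℝ) :=
        AddSubgroup.subset_closure (by simp)
      have hbS : b ∈ AddSubgroup.closure ({a, b} : Set ℝ) :=
        AddSubgroup.subset_closure (by simp)
      rw [hg0, AddSubgroup.mem_closure_singleton] at haS hbS
      obtain ⟨k, hk⟩ := haS
      obtain ⟨l, hl⟩ := hbS
      have hrel : ((l : ℚ) : ℝ) * a + ((-k : ℚ) : ℝ) * b = 0 := by
        push_cast
        rw [← hk, ← hl]
        push_cast [zsmul_eq_mul]
        ring
      obtain ⟨h1, h2⟩ := hind _ _ hrel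
      have hl0 : l = 0 := by exact_mod_cast h1
      have hk0 : k = 0 := by exact_mod_cast neg_eq_zero.mp h2
      rw [hk0] at hk
      simp at hk
      linarith
  -- find a small positive element
  set ε' : ℝ := min ε (min a b) with hε'
  have hε'0 : 0 < ε' := by positivity
  obtain ⟨y, hyS, hy0, hyε⟩ : ∃ y, y ∈ (AddSubgroup.closure ({a, b} : Set ℝ) : Set ℝ) ∧
      0 < y ∧ y < ε' := by
    obtain ⟨y, hy1, hy2⟩ := hdense.exists_mem_open isOpen_Ioo
      (Set.nonempty_Ioo.mpr hε'0)
    exact ⟨y, hy1, hy2.1, hy2.2⟩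
  rw [SetLike.mem_coe, AddSubgroup.mem_closure_pair] at hyS
  obtain ⟨M, N, hMN⟩ := hyS
  rw [zsmul_eq_mul, zsmul_eq_mul] at hMN
  have hyε'' : y ≤ ε := lt_of_lt_of_le hyε (min_le_left _ _) |>.le
  have hya : y < a := lt_of_lt_of_le hyε (le_trans (min_le_right _ _) (min_le_left _ _))
  have hyb : y < b := lt_of_lt_of_le hyε (le_trans (min_le_right _ _) (min_le_right _ _))
  -- sign analysis: M and N have opposite signs
  rcases lt_trichotomy M 0 with hM | hM | hM
  · -- M < 0, need N > 0 : y = M a + N b, apply swapped key_step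
    have hN : 0 < N := by
      by_contra hN
      push_neg at hN
      have : (M : ℝ) * a ≤ -a := by
        have : (M : ℝ) ≤ -1 := by exact_mod_cast (by omega : M ≤ (-1:ℤ))
        nlinarith
      have : (N : ℝ) * b ≤ 0 := mul_nonpos_of_nonpos_of_nonneg (by exact_mod_cast hN) hb.le
      linarith
    have hNc : ((N.toNat : ℕ) : ℝ) = (N : ℝ) := by
      exact_mod_cast congrArg Int.cast (Int.toNat_of_nonneg hN.le)
    have hMc : (((-M).toNat : ℕ) : ℝ) = -(M : ℝ) := by
      exact_mod_cast congrArg Int.cast (Int.toNat_of_nonneg (by omega : (0:ℤ) ≤ -M))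
    obtain ⟨T, hT⟩ := key_step b a c ε y hb ha N.toNat (-M).toNat
      (by rw [hNc, hMc]; linarith [hMN]) hy0 hyε'' (by omega)
    refine ⟨T, fun x hx => ?_⟩
    obtain ⟨k1, k2, hk1, hk2, hk⟩ := hT x hx
    exact ⟨k2, k1, hk2, hk1, by rw [show (k2:ℝ) * a + (k1:ℝ) * b + c
      = (k1:ℝ) * b + (k2:ℝ) * a + c by ring]; exact hk⟩
  · -- M = 0 : y = N b with 0 < y < b, impossible
    exfalso
    subst hM
    simp at hMN
    rcases lt_trichotomy N 0 with h | h | h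
    · have : (N : ℝ) * b ≤ -b := by
        have : (N : ℝ) ≤ -1 := by exact_mod_cast (by omega : N ≤ (-1:ℤ))
        nlinarith
      linarith
    · subst h; simp at hMN; linarith
    · have : b ≤ (N : ℝ) * b := by
        have : (1 : ℝ) ≤ N := by exact_mod_cast h
        nlinarith
      linarith
  · -- M > 0, need N < 0
    have hN : N < 0 := by
      by_contra hN
      push_neg at hN
      have h1 : a ≤ (M : ℝ) * a := by
        have : (1 : ℝ) ≤ M := by exact_mod_cast hM
        nlinarith
      have h2 : (0 : ℝ) ≤ (N : ℝ) * b := mul_nonneg (by exact_mod_cast hN) hb.le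
      linarith
    have hMc : ((M.toNat : ℕ) : ℝ) = (M : ℝ) := by
      exact_mod_cast congrArg Int.cast (Int.toNat_of_nonneg hM.le)
    have hNc : (((-N).toNat : ℕ) : ℝ) = -(N : ℝ) := by
      exact_mod_cast congrArg Int.cast (Int.toNat_of_nonneg (by omega : (0:ℤ) ≤ -N))
    obtain ⟨T, hT⟩ := key_step a b c ε y ha hb M.toNat (-N).toNat
      (by rw [hMc, hNc]; linarith [hMN]) hy0 hyε'' (by omega)
    exact ⟨T, hT⟩
end

section
/- Let Ω ∈ ℝ^{m×n} be a block-diagonal matrix with rectangular blocks Ω₁,…,Ω_k of sizes (m_j, n_j) along the diagonal, where m = Σ m_j and n = Σ n_j. Then, with respect to the maximum norms, ψ_Ω(t) = min_{1≤j≤k} ψ_{Ω_j}(t) for every t > 0. -/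
open Filter

/-- The best approximation function `ψ_Ω(t)` with respect to the maximum norms, for a
matrix `Ω` with arbitrary finite row and column index types. -/
noncomputable def psiMaxGen {ι κ : Type} [Fintype ι] [Fintype κ]
    (Ω : ι → κ → ℝ) (t : ℝ) : ℝ :=
  sInf { r : ℝ | ∃ (bh : κ → ℤ) (bt : ι → ℤ),
    (∃ i, bh i ≠ 0) ∧ (∀ i, |(bh i : ℝ)| ≤ t) ∧
    r = ⨆ j, |(∑ i, Ω j i * (bh i : ℝ)) + (bt j : ℝ)| }

/-- if `Ω ∈ ℝ^{m×n}` (with `m = Σ m_j`, `n = Σ n_j`) is block diagonal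
with blocks `Ω₁,…,Ω_k` of sizes `(m_j,n_j)` along the diagonal — block `j` occupying
the rows `m₁+⋯+m_{j−1}+1, …, m₁+⋯+m_j` and the columns
`n₁+⋯+n_{j−1}+1, …, n₁+⋯+n_j`, all other entries being zero, as expressed by the
canonical enumerations `e`, `f` of rows and columns — then
`ψ_Ω(t) = min_{1≤j≤k} ψ_{Ω_j}(t)` for all `t > 0`, with maximum norms throughout. -/
theorem psiMax_blockDiagonal (k : ℕ) (hk : 0 < k)
    (ms ns : Fin k → ℕ) (hms : ∀ j, 0 < ms j) (hns : ∀ j, 0 < ns j)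
    (Ωb : (j : Fin k) → Fin (ms j) → Fin (ns j) → ℝ)
    (e : (Σ j, Fin (ms j)) ≃ Fin (∑ j, ms j))
    (f : (Σ j, Fin (ns j)) ≃ Fin (∑ j, ns j))
    (he : ∀ p : Σ j, Fin (ms j),
      ((e p : Fin (∑ j, ms j)) : ℕ) =
        (∑ j' ∈ Finset.univ.filter (fun j' => j' < p.1), ms j') + (p.2 : ℕ))
    (hf : ∀ q : Σ j, Fin (ns j),
      ((f q : Fin (∑ j, ns j)) : ℕ) =
        (∑ j' ∈ Finset.univ.filter (fun j' => j' < q.1), ns j') + (q.2 : ℕ))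
    (Ω : Fin (∑ j, ms j) → Fin (∑ j, ns j) → ℝ)
    (hΩ : ∀ (p : Σ j, Fin (ms j)) (q : Σ j, Fin (ns j)),
      Ω (e p) (f q) = if h : q.1 = p.1 then Ωb p.1 p.2 (h ▸ q.2) else 0) :
    ∀ t : ℝ, 0 < t → psiMaxGen Ω t = ⨅ j, psiMaxGen (Ωb j) t := by
  classical
  intro t ht
  haveI hkn : Nonempty (Fin k) := Fin.pos_iff_nonempty.mp hk
  have hmn : ∀ j, Nonempty (Fin (ms j)) := fun j => Fin.pos_iff_nonempty.mp (hms j)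
  have hnn : ∀ j, Nonempty (Fin (ns j)) := fun j => Fin.pos_iff_nonempty.mp (hns j)
  haveI : Nonempty (Σ j, Fin (ms j)) :=
    ⟨⟨Classical.arbitrary _, (hmn (Classical.arbitrary _)).some⟩⟩
  haveI : Nonempty (Σ j, Fin (ns j)) :=
    ⟨⟨Classical.arbitrary _, (hnn (Classical.arbitrary _)).some⟩⟩
  haveI : Nonempty (Fin (∑ j, ms j)) := Equiv.nonempty e.symm
  haveI : Nonempty (Fin (∑ j, ns j)) := Equiv.nonempty f.symm
  by_cases ht1 : 1 ≤ t
  swap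
  · -- case t < 1 : all the sets are empty, both sides vanish
    have hempty : ∀ {ι κ : Type} [Fintype ι] [Fintype κ] (A : ι → κ → ℝ),
        psiMaxGen A t = 0 := by
      intro ι κ _ _ A
      unfold psiMaxGen
      convert Real.sInf_empty using 2
      rw [Set.eq_empty_iff_forall_notMem]
      intro r hr
      obtain ⟨bh, bt, ⟨i, hi⟩, hb, -⟩ := hr
      have h1 : (1 : ℝ) ≤ |(bh i : ℝ)| := by
        rw [← Int.cast_abs]
        exact_mod_cast Int.one_le_abs hi
      have := hb i
      linarith
    rw [hempty Ω]
    simp only [hempty]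
    rw [ciInf_const]
  -- main case : 1 ≤ t
  · -- the sets involved
    set S : Set ℝ := { r : ℝ | ∃ (bh : Fin (∑ j, ns j) → ℤ) (bt : Fin (∑ j, ms j) → ℤ),
      (∃ i, bh i ≠ 0) ∧ (∀ i, |(bh i : ℝ)| ≤ t) ∧
      r = ⨆ j', |(∑ i, Ω j' i * (bh i : ℝ)) + (bt j' : ℝ)| } with hSdef'
    set T : (j : Fin k) → Set ℝ := fun j =>
      { r : ℝ | ∃ (bh : Fin (ns j) → ℤ) (bt : Fin (ms j) → ℤ),
        (∃ i, bh i ≠ 0) ∧ (∀ i, |(bh i : ℝ)| ≤ t) ∧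
        r = ⨆ p, |(∑ i, Ωb j p i * (bh i : ℝ)) + (bt p : ℝ)| } with hTdef'
    have hSdef : psiMaxGen Ω t = sInf S := rfl
    have hTdef : ∀ j, psiMaxGen (Ωb j) t = sInf (T j) := fun _ => rfl
    -- row value computation
    have rowval : ∀ (j : Fin k) (p : Fin (ms j)) (Bh : Fin (∑ j, ns j) → ℤ),
        (∑ c, Ω (e ⟨j, p⟩) c * (Bh c : ℝ)) = ∑ i, Ωb j p i * (Bh (f ⟨j, i⟩) : ℝ) := by
      intro j p Bh
      rw [← Equiv.sum_comp f (fun c => Ω (e ⟨j, p⟩) c * (Bh c : ℝ))]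
      rw [← Finset.univ_sigma_univ, Finset.sum_sigma]
      rw [Finset.sum_eq_single_of_mem j (Finset.mem_univ j)]
      · exact Finset.sum_congr rfl fun i _ => by
          rw [hΩ ⟨j, p⟩ ⟨j, i⟩, dif_pos rfl]
      · intro j' _ hj'
        exact Finset.sum_eq_zero fun i _ => by
          rw [hΩ ⟨j, p⟩ ⟨j', i⟩, dif_neg hj', zero_mul]
    -- nonemptiness and lower bounds
    have hTne : ∀ j : Fin k, (T j).Nonempty := by
      intro j
      haveI := hnn j
      refine ⟨_, fun _ => 1, fun _ => 0, ⟨Classical.arbitrary _, one_ne_zero⟩, ?_, rfl⟩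
      intro i
      simpa using ht1
    have hT0 : ∀ j : Fin k, ∀ r ∈ T j, (0 : ℝ) ≤ r := by
      intro j r hr
      haveI := hmn j
      obtain ⟨bh, bt, -, -, rfl⟩ := hr
      exact le_trans (abs_nonneg _)
        (le_ciSup (Finite.bddAbove_range
          (fun p => |(∑ i, Ωb j p i * (bh i : ℝ)) + (bt p : ℝ)|)) (Classical.arbitrary _))
    have hS0 : ∀ r ∈ S, (0 : ℝ) ≤ r := by
      intro r hr
      obtain ⟨bh, bt, -, -, rfl⟩ := hr
      exact le_trans (abs_nonneg _)
        (le_ciSup (Finite.bddAbove_range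
          (fun j' => |(∑ i, Ω j' i * (bh i : ℝ)) + (bt j' : ℝ)|)) (Classical.arbitrary _))
    -- T j ⊆ S : extending a block solution by zero
    have hsub : ∀ j0 : Fin k, T j0 ⊆ S := by
      intro j0 r hr
      haveI := hmn j0
      haveI := hnn j0
      obtain ⟨bh, bt, ⟨i0, hi0⟩, hb, rfl⟩ := hr
      set bH : (Σ j, Fin (ns j)) → ℤ :=
        fun q => if h : q.1 = j0 then bh (h ▸ q.2) else 0 with hbH
      set bT : (Σ j, Fin (ms j)) → ℤ :=
        fun q => if h : q.1 = j0 then bt (h ▸ q.2) else 0 with hbT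
      have hbH1 : ∀ i : Fin (ns j0), bH ⟨j0, i⟩ = bh i := fun i => dif_pos rfl
      have hbH0 : ∀ (j : Fin k), j ≠ j0 → ∀ i : Fin (ns j), bH ⟨j, i⟩ = 0 :=
        fun j hj i => dif_neg hj
      have hbT1 : ∀ p : Fin (ms j0), bT ⟨j0, p⟩ = bt p := fun p => dif_pos rfl
      have hbT0 : ∀ (j : Fin k), j ≠ j0 → ∀ p : Fin (ms j), bT ⟨j, p⟩ = 0 :=
        fun j hj p => dif_neg hj
      set Bh : Fin (∑ j, ns j) → ℤ := fun c => bH (f.symm c) with hBh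
      set Bt : Fin (∑ j, ms j) → ℤ := fun rr => bT (e.symm rr) with hBt
      have hBhq : ∀ q : Σ j, Fin (ns j), Bh (f q) = bH q := fun q => by
        simp only [hBh, Equiv.symm_apply_apply]
      have hBtq : ∀ q : Σ j, Fin (ms j), Bt (e q) = bT q := fun q => by
        simp only [hBt, Equiv.symm_apply_apply]
      refine ⟨Bh, Bt, ⟨f ⟨j0, i0⟩, ?_⟩, ?_, ?_⟩
      · rw [hBhq ⟨j0, i0⟩, hbH1 i0]; exact hi0
      · -- the coefficients are bounded by t
        have hbHle : ∀ q : Σ j, Fin (ns j), |(bH q : ℝ)| ≤ t := by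
          rintro ⟨j, i⟩
          by_cases h : j = j0
          · subst h
            rw [hbH1 i]
            exact hb i
          · rw [hbH0 j h i]
            simpa using ht.le
        intro c
        rw [hBh]
        exact hbHle (f.symm c)
      · -- the sups agree
        have hrow : ∀ p : Fin (ms j0),
            (∑ c, Ω (e ⟨j0, p⟩) c * (Bh c : ℝ)) + (Bt (e ⟨j0, p⟩) : ℝ)
              = (∑ i, Ωb j0 p i * (bh i : ℝ)) + (bt p : ℝ) := by
          intro p
          rw [rowval j0 p Bh, hBtq ⟨j0, p⟩, hbT1 p]
          congr 1
          exact Finset.sum_congr rfl fun i _ => by rw [hBhq ⟨j0, i⟩, hbH1 i]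
        have hrow0 : ∀ (j : Fin k), j ≠ j0 → ∀ p : Fin (ms j),
            (∑ c, Ω (e ⟨j, p⟩) c * (Bh c : ℝ)) + (Bt (e ⟨j, p⟩) : ℝ) = 0 := by
          intro j hj p
          rw [rowval j p Bh, hBtq ⟨j, p⟩, hbT0 j hj p]
          have : ∀ i : Fin (ns j), Ωb j p i * (Bh (f ⟨j, i⟩) : ℝ) = 0 := fun i => by
            rw [hBhq ⟨j, i⟩, hbH0 j hj i]
            simp
          rw [Finset.sum_congr rfl fun i _ => this i]
          simp
        have hs0 : (0 : ℝ) ≤ ⨆ p, |(∑ i, Ωb j0 p i * (bh i : ℝ)) + (bt p : ℝ)| :=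
          le_trans (abs_nonneg _)
            (le_ciSup (Finite.bddAbove_range
              (fun p => |(∑ i, Ωb j0 p i * (bh i : ℝ)) + (bt p : ℝ)|)) (Classical.arbitrary _))
        apply le_antisymm
        · apply ciSup_le
          intro p
          have h1 := le_ciSup
            (Finite.bddAbove_range fun j' => |(∑ i, Ω j' i * (Bh i : ℝ)) + (Bt j' : ℝ)|)
            (e ⟨j0, p⟩)
          rwa [hrow p] at h1
        · have key : ∀ q : Σ j, Fin (ms j),
              |(∑ c, Ω (e q) c * (Bh c : ℝ)) + (Bt (e q) : ℝ)|
                ≤ ⨆ p, |(∑ i, Ωb j0 p i * (bh i : ℝ)) + (bt p : ℝ)| := by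
            rintro ⟨j, p⟩
            by_cases hj : j = j0
            · subst hj
              rw [hrow p]
              apply le_ciSup (Finite.bddAbove_range _) p
            · rw [hrow0 j hj p]
              simpa using hs0
          apply ciSup_le
          intro r'
          have h2 := key (e.symm r')
          rwa [Equiv.apply_symm_apply] at h2
    -- every element of S dominates some element of some T j
    have hge : ∀ r ∈ S, (⨅ j, psiMaxGen (Ωb j) t) ≤ r := by
      intro r hr
      obtain ⟨Bh, Bt, ⟨c0, hc0⟩, hBb, rfl⟩ := hr
      rcases hq : f.symm c0 with ⟨j0, i0⟩
      have hc0' : f ⟨j0, i0⟩ = c0 := by rw [← hq, Equiv.apply_symm_apply]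
      haveI := hmn j0
      have hmem : (⨆ p, |(∑ i, Ωb j0 p i * (Bh (f ⟨j0, i⟩) : ℝ))
          + (Bt (e ⟨j0, p⟩) : ℝ)|) ∈ T j0 := by
        refine ⟨fun i => Bh (f ⟨j0, i⟩), fun p => Bt (e ⟨j0, p⟩), ⟨i0, ?_⟩,
          fun i => hBb _, rfl⟩
        show Bh (f ⟨j0, i0⟩) ≠ 0
        rw [hc0']
        exact hc0
      have hub : ∀ p : Fin (ms j0),
          |(∑ i, Ωb j0 p i * (Bh (f ⟨j0, i⟩) : ℝ)) + (Bt (e ⟨j0, p⟩) : ℝ)|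
            ≤ ⨆ j', |(∑ i, Ω j' i * (Bh i : ℝ)) + (Bt j' : ℝ)| := by
        intro p
        have h1 := le_ciSup
          (Finite.bddAbove_range fun j' => |(∑ i, Ω j' i * (Bh i : ℝ)) + (Bt j' : ℝ)|)
          (e ⟨j0, p⟩)
        rwa [rowval j0 p Bh] at h1
      calc (⨅ j, psiMaxGen (Ωb j) t) ≤ psiMaxGen (Ωb j0) t :=
              ciInf_le (Finite.bddBelow_range _) j0
        _ ≤ _ := by
              rw [hTdef j0]
              exact csInf_le ⟨0, fun x hx => hT0 j0 x hx⟩ hmem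
        _ ≤ _ := ciSup_le hub
    -- conclusion
    apply le_antisymm
    · apply le_ciInf
      intro j
      rw [hSdef, hTdef j]
      exact csInf_le_csInf ⟨0, fun r hr => hS0 r hr⟩ (hTne j) (hsub j)
    · rw [hSdef]
      obtain ⟨r, hr⟩ := hTne (Classical.arbitrary _)
      exact le_csInf ⟨r, hsub _ hr⟩ hge
end
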